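/- arXiv:1412.5707 — 5 statements merged into one kernel-verified Lean document; each statement's English description precedes it below -/
import Mathlib

section
/- Let T > 0 and let u : ℝ → ℝ be a measurable function that is integrable on [0,T]. Then lim_{p→0⁺} ∫₀ᵀ |u(t)|^p dt = m({t ∈ [0,T] : u(t) ≠ 0}), where m is Lebesgue measure. -/
open MeasureTheory Filter Topology Set

theorem Real.rpow_le_max_one_self {x p : ℝ} (hx : 0 ≤ x) (hp₀ : 0 ≤ p) (hp₁ : p ≤ 1) :
    x ^ p ≤ max 1 x := by
  rcases le_total x 1 with hx₁ | hx₁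
  · exact le_max_of_le_left (Real.rpow_le_one hx hx₁ hp₀)
  · exact le_max_of_le_right (Real.rpow_le_self_of_one_le hx₁ hp₁)

theorem Real.tendsto_abs_rpow_nhdsGT_zero (x : ℝ) :
    Tendsto (fun p : ℝ => |x| ^ p) (𝓝[>] 0) (𝓝 ({y : ℝ | y ≠ 0}.indicator 1 x)) := by
  by_cases hx : x = 0
  · subst hx
    refine tendsto_const_nhds.congr' ?_
    filter_upwards [self_mem_nhdsWithin] with p (hp : 0 < p)
    simp [Real.zero_rpow hp.ne']
  · have h := (Real.continuousAt_const_rpow (b := 0) (abs_ne_zero.2 hx)).tendsto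
    rw [Real.rpow_zero] at h
    simpa [indicator_of_mem, hx] using h.mono_left nhdsWithin_le_nhds

theorem MeasureTheory.integral_indicator_one₀ {α : Type*} [MeasurableSpace α] {μ : Measure α}
    {s : Set α} (hs : NullMeasurableSet s μ) : ∫ a, s.indicator 1 a ∂μ = μ.real s := by
  rw [integral_indicator₀ hs, Pi.one_def, setIntegral_const, smul_eq_mul, mul_one]

/-- As `p → 0⁺`, `|f|ᵖ` tends pointwise to the indicator of the support of `f`, dominated by
`max 1 |f|` for `p ≤ 1`. -/
theorem MeasureTheory.tendsto_integral_abs_rpow_nhdsGT_zero {α : Type*} [MeasurableSpace α]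
    {μ : Measure α} [IsFiniteMeasure μ] {f : α → ℝ} (hf : Integrable f μ) :
    Tendsto (fun p : ℝ => ∫ a, |f a| ^ p ∂μ) (𝓝[>] 0) (𝓝 (μ.real {a | f a ≠ 0})) := by
  have hsupp : NullMeasurableSet {a | f a ≠ 0} μ :=
    hf.aemeasurable.nullMeasurable (measurableSet_singleton 0).compl
  rw [← integral_indicator_one₀ hsupp]
  refine tendsto_integral_filter_of_dominated_convergence (fun a => max 1 |f a|)
    (Eventually.of_forall fun p => (hf.aemeasurable.abs.pow_const p).aestronglyMeasurable)
    ?_ ((integrable_const 1).sup hf.abs)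
    (Eventually.of_forall fun a => Real.tendsto_abs_rpow_nhdsGT_zero (f a))
  filter_upwards [Ioc_mem_nhdsGT_of_mem (show (0 : ℝ) ∈ Ico 0 1 by norm_num)] with p hp
  refine Eventually.of_forall fun a => ?_
  rw [Real.norm_of_nonneg (Real.rpow_nonneg (abs_nonneg _) _)]
  exact Real.rpow_le_max_one_self (abs_nonneg _) hp.1.le hp.2

theorem tendsto_lp_to_l0_general (T : ℝ) (u : ℝ → ℝ)
    (hint : IntegrableOn u (Set.Icc (0:ℝ) T)) :
    Filter.Tendsto (fun p : ℝ => ∫ t in Set.Icc (0:ℝ) T, |u t| ^ p)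
      (nhdsWithin 0 (Set.Ioi (0:ℝ)))
      (nhds ((volume {t ∈ Set.Icc (0:ℝ) T | u t ≠ 0}).toReal)) := by
  have h := tendsto_integral_abs_rpow_nhdsGT_zero hint
  rwa [measureReal_restrict_apply' measurableSet_Icc, inter_comm, measureReal_def] at h

/-- for measurable `u` integrable on `[0,T]`,
`lim_{p→0⁺} ∫₀ᵀ |u(t)|^p dt = m {t ∈ [0,T] : u t ≠ 0}`. -/
theorem tendsto_lp_to_l0 (T : ℝ) (hT : 0 < T) (u : ℝ → ℝ) (hu : Measurable u)
    (hint : IntegrableOn u (Set.Icc (0:ℝ) T)) :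
    Filter.Tendsto (fun p : ℝ => ∫ t in Set.Icc (0:ℝ) T, |u t| ^ p)
      (nhdsWithin 0 (Set.Ioi (0:ℝ)))
      (nhds ((volume {t ∈ Set.Icc (0:ℝ) T | u t ≠ 0}).toReal)) :=
  tendsto_lp_to_l0_general T u hint
end

section
/- (Lemma 5.5, existence part.) For every initial state ξ ∈ R(T), there exists an admissible control u* ∈ U(ξ) that minimizes the L¹ cost, i.e., ‖u*‖₁ ≤ ‖u‖₁ for all u ∈ U(ξ). -/
open MeasureTheory

noncomputable section

/-- A control: a measurable function with `|u t| ≤ 1` a.e. on `[0, T]`. -/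
def IsControl (T : ℝ) (u : ℝ → ℝ) : Prop :=
  Measurable u ∧ ∀ᵐ t ∂(volume.restrict (Set.Icc (0:ℝ) T)), |u t| ≤ 1

/-- `∫₀ᵀ e^{−As} b u(s) ds`, the endpoint map of the system `dx/dt = Ax + bu`. -/
def steer (n : ℕ) (A : Matrix (Fin n) (Fin n) ℝ) (b : Fin n → ℝ) (T : ℝ) (u : ℝ → ℝ) :
    Fin n → ℝ :=
  ∫ s in Set.Icc (0:ℝ) T, u s • (NormedSpace.exp (-(s • A))).mulVec b

/-- `L¹` norm of a control on `[0, T]`. -/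
def L1norm (T : ℝ) (u : ℝ → ℝ) : ℝ := ∫ t in Set.Icc (0:ℝ) T, |u t|

/-- The support of `u`: closure of `{t ∈ [0,T] : u t ≠ 0}`. -/
def sparseSupp (T : ℝ) (u : ℝ → ℝ) : Set ℝ :=
  closure {t ∈ Set.Icc (0:ℝ) T | u t ≠ 0}

/-- `L⁰` "norm": Lebesgue measure of the support. -/
def L0norm (T : ℝ) (u : ℝ → ℝ) : ℝ := (volume (sparseSupp T u)).toReal

/-- Admissible controls for initial state `ξ`: controls steering `ξ` to `0` at time `T`. -/
def Adm (n : ℕ) (A : Matrix (Fin n) (Fin n) ℝ) (b : Fin n → ℝ) (T : ℝ) (ξ : Fin n → ℝ) :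
    Set (ℝ → ℝ) :=
  {u | IsControl T u ∧ ξ = -(steer n A b T u)}

/-- The reachable set `R(T)`. -/
def ReachSet (n : ℕ) (A : Matrix (Fin n) (Fin n) ℝ) (b : Fin n → ℝ) (T : ℝ) :
    Set (Fin n → ℝ) :=
  {x | ∃ u, IsControl T u ∧ x = steer n A b T u}

/-- The set `R_α`. -/
def Rset (n : ℕ) (A : Matrix (Fin n) (Fin n) ℝ) (b : Fin n → ℝ) (T α : ℝ) :
    Set (Fin n → ℝ) :=
  {x | ∃ u, IsControl T u ∧ L1norm T u ≤ α ∧ x = steer n A b T u}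

/-- Value function of the `L¹`-optimal control problem. -/
def V1 (n : ℕ) (A : Matrix (Fin n) (Fin n) ℝ) (b : Fin n → ℝ) (T : ℝ) (ξ : Fin n → ℝ) : ℝ :=
  sInf (L1norm T '' Adm n A b T ξ)

/-- Value function of the sparse (`L⁰`) optimal control problem. -/
def V0 (n : ℕ) (A : Matrix (Fin n) (Fin n) ℝ) (b : Fin n → ℝ) (T : ℝ) (ξ : Fin n → ℝ) : ℝ :=
  sInf (L0norm T '' Adm n A b T ξ)

/-- Controllability of the pair `(A, b)`: `span {b, Ab, …, A^{n−1} b} = ℝⁿ`. -/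
def Controllable (n : ℕ) (A : Matrix (Fin n) (Fin n) ℝ) (b : Fin n → ℝ) : Prop :=
  Submodule.span ℝ (Set.range fun i : Fin n => (A ^ (i : ℕ)).mulVec b) = ⊤


/-!
Write a control as `u = u⁺ - u⁻`, two densities with values in `[0, 1]`. Regarded as functionals
on `L²`, such densities form a weak-* compact set (Banach–Alaoglu, together with order constraints
that are weak-* closed); the moment constraints `∫ u f_i = y_i` are weak-* closed and the cost
`∫ u⁺ + ∫ u⁻` is weak-* continuous. So the lifted problem has a minimiser `(v, w)`, and
`u* = v - w` is admissible with `‖u*‖₁ ≤ ∫ v + ∫ w`, which is at most the cost of the lift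
`(u⁺, u⁻)` of any admissible `u`, namely `‖u‖₁`.
-/

open scoped ENNReal InnerProductSpace

namespace L2Densities

variable {α : Type*} [MeasurableSpace α] {μ : Measure α}

def weakDualOf (v : Lp ℝ 2 μ) : WeakDual ℝ (Lp ℝ 2 μ) :=
  StrongDual.toWeakDual (InnerProductSpace.toDual ℝ _ v)

@[simp]
lemma weakDualOf_apply (v g : Lp ℝ 2 μ) : weakDualOf v g = ⟪v, g⟫_ℝ := rfl

lemma weakDualOf_surjective : Function.Surjective (weakDualOf (μ := μ)) := fun φ =>
  ⟨(InnerProductSpace.toDual ℝ (Lp ℝ 2 μ)).symm (WeakDual.toStrongDual φ),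
    DFunLike.ext _ _ fun _ => InnerProductSpace.toDual_symm_apply (E := Lp ℝ 2 μ)⟩

lemma inner_eq_integral_mul (v g : Lp ℝ 2 μ) : ⟪v, g⟫_ℝ = ∫ t, v t * g t ∂μ := by
  simp [L2.inner_def, mul_comm]

lemma inner_toLp_eq_integral_mul (v : Lp ℝ 2 μ) {g : α → ℝ} (hg : MemLp g 2 μ) :
    ⟪v, hg.toLp g⟫_ℝ = ∫ t, v t * g t ∂μ := by
  rw [inner_eq_integral_mul]
  exact integral_congr_ae (hg.coeFn_toLp.mono fun t h => by simp only [h])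

lemma toLp_inner_toLp_eq_integral_mul {v g : α → ℝ} (hv : MemLp v 2 μ) (hg : MemLp g 2 μ) :
    ⟪hv.toLp v, hg.toLp g⟫_ℝ = ∫ t, v t * g t ∂μ := by
  rw [inner_toLp_eq_integral_mul]
  exact integral_congr_ae (hv.coeFn_toLp.mono fun t h => by simp only [h])

lemma memLp_of_ae_mem_Icc [IsFiniteMeasure μ] {p : ℝ≥0∞} {v : α → ℝ}
    (hv : AEStronglyMeasurable v μ) (h : ∀ᵐ t ∂μ, v t ∈ Set.Icc 0 1) : MemLp v p μ :=
  MemLp.of_bound hv 1 <| h.mono fun t ht => by rw [Real.norm_eq_abs, abs_of_nonneg ht.1]; exact ht.2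

-- The radius `μ(α) ^ (1 / 2)` bounds the `L²` norm of any density with values in `[0, 1]`.
variable (μ) in
def unitIntervalDensities : Set (WeakDual ℝ (Lp ℝ 2 μ)) :=
  WeakDual.toStrongDual ⁻¹' Metric.closedBall 0 (measureUnivNNReal μ ^ (2 : ℝ≥0∞).toReal⁻¹) ∩
    ⋂ (g : Lp ℝ 2 μ) (_ : 0 ≤ᵐ[μ] g), {φ | φ g ∈ Set.Icc 0 (∫ t, g t ∂μ)}

lemma isCompact_unitIntervalDensities : IsCompact (unitIntervalDensities μ) := by
  refine WeakDual.isCompact_of_bounded_of_closed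
    ((WeakDual.isBounded_closedBall _ _).subset Set.inter_subset_left) ?_
  refine (WeakDual.isClosed_closedBall _ _).inter
    (isClosed_iInter fun g => isClosed_iInter fun _ => ?_)
  exact isClosed_Icc.preimage (WeakDual.eval_continuous g)

lemma weakDualOf_mem_unitIntervalDensities_iff [IsFiniteMeasure μ] {v : Lp ℝ 2 μ} :
    weakDualOf v ∈ unitIntervalDensities μ ↔ ∀ᵐ t ∂μ, v t ∈ Set.Icc 0 1 := by
  constructor
  · rintro ⟨-, hφ⟩
    have hset : ∀ s, MeasurableSet s → μ s < ∞ → ∫ t in s, v t ∂μ ∈ Set.Icc 0 (μ.real s) := by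
      intro s hs hμs
      have h := Set.mem_iInter₂.1 hφ (indicatorConstLp 2 hs hμs.ne 1) <|
        indicatorConstLp_coeFn.mono fun t ht => ht ▸ Set.indicator_nonneg (fun _ _ => zero_le_one) t
      rwa [Set.mem_ofPred_eq, weakDualOf_apply, real_inner_comm, L2.inner_indicatorConstLp_one,
        integral_indicatorConstLp, smul_eq_mul, mul_one] at h
    have hv := (Lp.memLp v).integrable one_le_two
    filter_upwards [ae_nonneg_of_forall_setIntegral_nonneg hv fun s hs hμs => (hset s hs hμs).1,
      ae_le_of_forall_setIntegral_le hv (integrable_const 1) fun s hs hμs => by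
        simpa using (hset s hs hμs).2] with t h0 h1 using ⟨h0, h1⟩
  · intro hv
    refine ⟨?_, Set.mem_iInter₂.2 fun g hg => ?_⟩
    · rw [Set.mem_preimage, mem_closedBall_zero_iff]
      refine ((InnerProductSpace.toDual ℝ _).norm_map v).trans_le
        ((Lp.norm_le_of_ae_bound zero_le_one ?_).trans_eq (mul_one _))
      exact hv.mono fun t ht => by rw [Real.norm_eq_abs, abs_of_nonneg ht.1]; exact ht.2
    · rw [Set.mem_ofPred_eq, weakDualOf_apply, inner_eq_integral_mul]
      have hvg : Integrable (fun t => v t * g t) μ := (Lp.memLp v).integrable_mul (Lp.memLp g)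
      exact ⟨integral_nonneg_of_ae (by filter_upwards [hv, hg] with t h h' using mul_nonneg h.1 h'),
        integral_mono_ae hvg ((Lp.memLp g).integrable one_le_two) <| by
          filter_upwards [hv, hg] with t h h' using mul_le_of_le_one_left h' h.2⟩


lemma weakDualOf_toLp_mem_unitIntervalDensities [IsFiniteMeasure μ] {v : α → ℝ}
    (hv : MemLp v 2 μ) (h : ∀ᵐ t ∂μ, v t ∈ Set.Icc 0 1) :
    weakDualOf (hv.toLp v) ∈ unitIntervalDensities μ :=
  weakDualOf_mem_unitIntervalDensities_iff.2 <| by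
    filter_upwards [hv.coeFn_toLp, h] with t h h' using h ▸ h'

end L2Densities

open L2Densities

section MomentProblem

variable {α ι : Type*} [MeasurableSpace α] {μ : Measure α}

variable (μ) in
def momentControls (f : ι → α → ℝ) (y : ι → ℝ) : Set (α → ℝ) :=
  {u | Measurable u ∧ (∀ᵐ t ∂μ, |u t| ≤ 1) ∧ ∀ i, ∫ t, u t * f i t ∂μ = y i}

variable {f : ι → α → ℝ} (hf : ∀ i, MemLp (f i) 2 μ) (y : ι → ℝ)

def liftedMomentControls : Set (WeakDual ℝ (Lp ℝ 2 μ) × WeakDual ℝ (Lp ℝ 2 μ)) :=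
  unitIntervalDensities μ ×ˢ unitIntervalDensities μ ∩
    {p | ∀ i, p.1 ((hf i).toLp) - p.2 ((hf i).toLp) = y i}

lemma isCompact_liftedMomentControls : IsCompact (liftedMomentControls hf y) := by
  refine (isCompact_unitIntervalDensities.prod isCompact_unitIntervalDensities).inter_right ?_
  simp only [Set.ofPred_forall]
  exact isClosed_iInter fun i => isClosed_eq
    (((WeakDual.eval_continuous _).comp continuous_fst).sub
      ((WeakDual.eval_continuous _).comp continuous_snd)) continuous_const

variable [IsFiniteMeasure μ]

variable (μ) in
def liftedCost (p : WeakDual ℝ (Lp ℝ 2 μ) × WeakDual ℝ (Lp ℝ 2 μ)) : ℝ :=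
  p.1 (Lp.const 2 μ 1) + p.2 (Lp.const 2 μ 1)

lemma continuous_liftedCost : Continuous (liftedCost μ) :=
  ((WeakDual.eval_continuous _).comp continuous_fst).add
    ((WeakDual.eval_continuous _).comp continuous_snd)

lemma exists_lift_of_mem_momentControls {u : α → ℝ} (hu : u ∈ momentControls μ f y) :
    ∃ p ∈ liftedMomentControls hf y, liftedCost μ p = ∫ t, |u t| ∂μ := by
  obtain ⟨hum, hub, hmom⟩ := hu
  have hparts : ∀ᵐ t ∂μ, (u t)⁺ ∈ Set.Icc 0 1 ∧ (u t)⁻ ∈ Set.Icc 0 1 := hub.mono fun t ht => by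
    have := posPart_add_negPart (u t)
    exact ⟨⟨posPart_nonneg _, by linarith [negPart_nonneg (u t)]⟩,
      ⟨negPart_nonneg _, by linarith [posPart_nonneg (u t)]⟩⟩
  have hpos : MemLp (fun t => (u t)⁺) 2 μ :=
    memLp_of_ae_mem_Icc (by fun_prop) (hparts.mono fun _ h => h.1)
  have hneg : MemLp (fun t => (u t)⁻) 2 μ :=
    memLp_of_ae_mem_Icc (by fun_prop) (hparts.mono fun _ h => h.2)
  refine ⟨(weakDualOf (hpos.toLp _), weakDualOf (hneg.toLp _)),
    ⟨⟨weakDualOf_toLp_mem_unitIntervalDensities hpos (hparts.mono fun _ h => h.1),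
      weakDualOf_toLp_mem_unitIntervalDensities hneg (hparts.mono fun _ h => h.2)⟩, fun i => ?_⟩, ?_⟩
  · simp only [weakDualOf_apply, toLp_inner_toLp_eq_integral_mul]
    have hint (v : α → ℝ) (hv : MemLp v 2 μ) : Integrable (fun t => v t * f i t) μ :=
      hv.integrable_mul (hf i)
    rw [← integral_sub (hint _ hpos) (hint _ hneg), ← hmom i]
    simp only [← sub_mul, posPart_sub_negPart]
  · simp only [liftedCost, weakDualOf_apply, ← MemLp.toLp_const, toLp_inner_toLp_eq_integral_mul,
      mul_one]
    rw [← integral_add (hpos.integrable one_le_two) (hneg.integrable one_le_two)]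
    simp only [posPart_add_negPart]

lemma exists_mem_momentControls_of_lift {p} (hp : p ∈ liftedMomentControls hf y) :
    ∃ u ∈ momentControls μ f y, ∫ t, |u t| ∂μ ≤ liftedCost μ p := by
  obtain ⟨⟨hp₁, hp₂⟩, hmom⟩ := hp
  obtain ⟨v, hv⟩ := weakDualOf_surjective p.1
  obtain ⟨w, hw⟩ := weakDualOf_surjective p.2
  rw [← hv, weakDualOf_mem_unitIntervalDensities_iff] at hp₁
  rw [← hw, weakDualOf_mem_unitIntervalDensities_iff] at hp₂
  have hd : AEStronglyMeasurable (fun t => v t - w t) μ :=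
    (Lp.aestronglyMeasurable v).sub (Lp.aestronglyMeasurable w)
  have hu := hd.ae_eq_mk
  refine ⟨hd.mk _, ⟨hd.stronglyMeasurable_mk.measurable, ?_, fun i => ?_⟩, ?_⟩
  · filter_upwards [hu, hp₁, hp₂] with t h h₁ h₂
    rw [← h, abs_le]
    constructor <;> linarith [h₁.1, h₁.2, h₂.1, h₂.2]
  · have hint (v : Lp ℝ 2 μ) : Integrable (fun t => v t * f i t) μ :=
      (Lp.memLp v).integrable_mul (hf i)
    rw [← hmom i, ← hv, ← hw, weakDualOf_apply, weakDualOf_apply, inner_toLp_eq_integral_mul,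
      inner_toLp_eq_integral_mul, ← integral_sub (hint v) (hint w)]
    exact integral_congr_ae (hu.mono fun t h => by simp only [← h, sub_mul])
  · have hint (v : Lp ℝ 2 μ) : Integrable v μ := (Lp.memLp v).integrable one_le_two
    simp only [liftedCost, ← hv, ← hw, weakDualOf_apply, ← MemLp.toLp_const,
      inner_toLp_eq_integral_mul, mul_one]
    rw [← integral_add (hint v) (hint w)]
    refine integral_mono_of_nonneg (ae_of_all _ fun t => abs_nonneg _) ((hint v).add (hint w)) ?_
    filter_upwards [hu, hp₁, hp₂] with t h h₁ h₂
    rw [← h, abs_le]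
    constructor <;> linarith [h₁.1, h₂.1]

theorem exists_isMinOn_integral_abs_momentControls
    (hf : ∀ i, MemLp (f i) 2 μ) (hne : (momentControls μ f y).Nonempty) :
    ∃ u ∈ momentControls μ f y, IsMinOn (fun u => ∫ t, |u t| ∂μ) (momentControls μ f y) u := by
  obtain ⟨p₀, hp₀, -⟩ := exists_lift_of_mem_momentControls hf y hne.some_mem
  obtain ⟨p, hp, hpmin⟩ := (isCompact_liftedMomentControls hf y).exists_isMinOn ⟨p₀, hp₀⟩
    continuous_liftedCost.continuousOn
  obtain ⟨u, hu, hup⟩ := exists_mem_momentControls_of_lift hf y hp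
  refine ⟨u, hu, fun w hw => ?_⟩
  obtain ⟨q, hq, hqw⟩ := exists_lift_of_mem_momentControls hf y hw
  exact hup.trans ((hpmin hq).trans_eq hqw)

end MomentProblem

section ControlSystem

variable {n : ℕ} (A : Matrix (Fin n) (Fin n) ℝ) (b : Fin n → ℝ) (T : ℝ)

lemma continuous_exp_neg_smul_mulVec :
    Continuous fun s : ℝ => (NormedSpace.exp (-(s • A))).mulVec b := by
  have hexp : Continuous (NormedSpace.exp : Matrix (Fin n) (Fin n) ℝ → _) :=
    open scoped Matrix.Norms.Operator in NormedSpace.exp_continuous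
  exact (hexp.comp (by fun_prop)).matrix_mulVec continuous_const

lemma memLp_exp_neg_smul_mulVec_apply (i : Fin n) :
    MemLp (fun s => (NormedSpace.exp (-(s • A))).mulVec b i) 2 (volume.restrict (Set.Icc 0 T)) := by
  have hc := (continuous_apply i).comp (continuous_exp_neg_smul_mulVec A b)
  obtain ⟨C, hC⟩ := isCompact_Icc.exists_bound_of_continuousOn hc.continuousOn
  exact MemLp.of_bound hc.aestronglyMeasurable C (ae_restrict_of_forall_mem measurableSet_Icc hC)

lemma steer_apply {u : ℝ → ℝ} (hu : IsControl T u) (i : Fin n) :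
    steer n A b T u i = ∫ s in Set.Icc 0 T, u s * (NormedSpace.exp (-(s • A))).mulVec b i := by
  have hu2 : MemLp u 2 (volume.restrict (Set.Icc 0 T)) :=
    MemLp.of_bound hu.1.aestronglyMeasurable 1 (by simpa only [Real.norm_eq_abs] using hu.2)
  exact eval_integral (fun j => hu2.integrable_mul (memLp_exp_neg_smul_mulVec_apply A b T j)) i

lemma adm_eq_momentControls (ξ : Fin n → ℝ) :
    Adm n A b T ξ = momentControls (volume.restrict (Set.Icc 0 T))
      (fun i s => (NormedSpace.exp (-(s • A))).mulVec b i) (-ξ) := by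
  ext u
  refine ⟨fun ⟨hu, hξ⟩ => ⟨hu.1, hu.2, fun i => ?_⟩, fun ⟨hm, hb, hmom⟩ => ⟨⟨hm, hb⟩, ?_⟩⟩
  · rw [← steer_apply A b T hu, hξ, neg_neg]
  · ext i
    rw [Pi.neg_apply, steer_apply A b T ⟨hm, hb⟩, hmom, Pi.neg_apply, neg_neg]

lemma neg_mem_adm_steer {u : ℝ → ℝ} (hu : IsControl T u) :
    -u ∈ Adm n A b T (steer n A b T u) := by
  refine ⟨⟨hu.1.neg, by simpa only [Pi.neg_apply, abs_neg] using hu.2⟩, ?_⟩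
  rw [steer, steer, ← integral_neg]
  simp only [Pi.neg_apply, neg_smul, neg_neg]

end ControlSystem

theorem exists_l1_optimal_general (T : ℝ) (n : ℕ)
    (A : Matrix (Fin n) (Fin n) ℝ) (b : Fin n → ℝ) :
    ∀ ξ ∈ ReachSet n A b T,
      ∃ ustar ∈ Adm n A b T ξ, ∀ u ∈ Adm n A b T ξ, L1norm T ustar ≤ L1norm T u := by
  rintro ξ ⟨u₀, hu₀, rfl⟩
  rw [adm_eq_momentControls]
  exact exists_isMinOn_integral_abs_momentControls _ (memLp_exp_neg_smul_mulVec_apply A b T)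
    ⟨-u₀, adm_eq_momentControls A b T _ ▸ neg_mem_adm_steer A b T hu₀⟩

/-- Lemma 5.5, existence: every `ξ ∈ R(T)` has an `L¹`-optimal admissible control. -/
theorem exists_l1_optimal (T : ℝ) (hT : 0 < T) (n : ℕ) (hn : 1 ≤ n)
    (A : Matrix (Fin n) (Fin n) ℝ) (b : Fin n → ℝ) :
    ∀ ξ ∈ ReachSet n A b T,
      ∃ ustar ∈ Adm n A b T ξ, ∀ u ∈ Adm n A b T ξ, L1norm T ustar ≤ L1norm T u :=
  exists_l1_optimal_general T n A b

end
end

section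
/- (Lemma 5.5, boundary part.) Let ξ ∈ R(T) and let u* ∈ U(ξ) be an L¹-optimal control for ξ (i.e., ‖u*‖₁ ≤ ‖u‖₁ for all u ∈ U(ξ)). Set θ = ‖u*‖₁. Then ξ belongs to the topological boundary ∂R_θ of the set R_θ. -/
open MeasureTheory

noncomputable section

open Set Filter Topology

/- If `ξ` were an interior point of `R_θ`, then so would be `t • ξ` for some `t > 1`, and scaling
a control reaching `t • ξ` by `-1/t` steers `ξ` to the origin at cost at most `θ / t`. For `θ > 0`
this undercuts the optimal cost; for `θ = 0` the set `R_0 = {0}` has empty interior. -/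

lemma exists_one_lt_smul_mem_of_mem_nhds {E : Type*} [AddCommGroup E] [TopologicalSpace E]
    [Module ℝ E] [ContinuousSMul ℝ E] {S : Set E} {x : E} (hS : S ∈ 𝓝 x) :
    ∃ t : ℝ, 1 < t ∧ t • x ∈ S := by
  have hcont : Tendsto (fun t : ℝ => t • x) (𝓝[>] 1) (𝓝 x) :=
    ((continuous_id.smul continuous_const).tendsto' 1 x (one_smul ℝ x)).mono_left
      nhdsWithin_le_nhds
  exact ((hcont.eventually hS).and self_mem_nhdsWithin).exists.imp fun _ ht => ⟨ht.2, ht.1⟩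

section Control

variable {n : ℕ} {A : Matrix (Fin n) (Fin n) ℝ} {b : Fin n → ℝ} {T : ℝ} {u : ℝ → ℝ}

lemma IsControl.const_mul (hu : IsControl T u) {c : ℝ} (hc : |c| ≤ 1) :
    IsControl T (fun s => c * u s) := by
  refine ⟨hu.1.const_mul c, ?_⟩
  filter_upwards [hu.2] with t ht
  rw [abs_mul]
  exact mul_le_one₀ hc (abs_nonneg _) ht

lemma steer_const_mul (c : ℝ) (u : ℝ → ℝ) :
    steer n A b T (fun s => c * u s) = c • steer n A b T u := by
  simp only [steer, mul_smul, integral_smul]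

lemma L1norm_const_mul (c : ℝ) (u : ℝ → ℝ) :
    L1norm T (fun s => c * u s) = |c| * L1norm T u := by
  simp only [L1norm, abs_mul, integral_const_mul]

lemma L1norm_nonneg (T : ℝ) (u : ℝ → ℝ) : 0 ≤ L1norm T u :=
  integral_nonneg fun _ => abs_nonneg _

lemma IsControl.steer_eq_zero_of_L1norm_eq_zero (hu : IsControl T u)
    (h0 : L1norm T u = 0) : steer n A b T u = 0 := by
  have hint : IntegrableOn u (Icc 0 T) :=
    (integrable_const 1).mono' hu.1.aestronglyMeasurable (by simpa using hu.2)
  have hzero := (integral_eq_zero_iff_of_nonneg (fun t => abs_nonneg (u t)) hint.abs).1 h0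
  refine integral_eq_zero_of_ae ?_
  filter_upwards [hzero] with t ht
  simp [abs_eq_zero.1 ht]

lemma smul_mem_Rset {α c : ℝ} {x : Fin n → ℝ} (hx : x ∈ Rset n A b T α) (hc : |c| ≤ 1) :
    c • x ∈ Rset n A b T (|c| * α) := by
  obtain ⟨u, hu, hL1, rfl⟩ := hx
  exact ⟨fun s => c * u s, hu.const_mul hc, by
    rw [L1norm_const_mul]; exact mul_le_mul_of_nonneg_left hL1 (abs_nonneg c),
    (steer_const_mul c u).symm⟩

lemma mem_Rset_of_smul_mem {α t : ℝ} {x : Fin n → ℝ} (ht : 1 ≤ t)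
    (hx : t • x ∈ Rset n A b T α) : x ∈ Rset n A b T (t⁻¹ * α) := by
  have ht0 : 0 < t := one_pos.trans_le ht
  have hinv : |t⁻¹| = t⁻¹ := abs_of_pos (inv_pos.2 ht0)
  simpa [smul_smul, inv_mul_cancel₀ ht0.ne', hinv] using
    smul_mem_Rset hx (c := t⁻¹) (by rw [hinv]; exact inv_le_one_of_one_le₀ ht)

lemma mem_Rset_iff_exists_mem_Adm {α : ℝ} {ξ : Fin n → ℝ} :
    ξ ∈ Rset n A b T α ↔ ∃ u ∈ Adm n A b T ξ, L1norm T u ≤ α := by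
  have hneg : |(-1 : ℝ)| ≤ 1 := by simp
  constructor
  · rintro ⟨u, hu, hL1, rfl⟩
    refine ⟨fun s => -1 * u s, ⟨hu.const_mul hneg, ?_⟩, ?_⟩
    · rw [steer_const_mul, neg_one_smul, neg_neg]
    · rwa [L1norm_const_mul, abs_neg, abs_one, one_mul]
  · rintro ⟨u, ⟨hu, rfl⟩, hL1⟩
    refine ⟨fun s => -1 * u s, hu.const_mul hneg, ?_, ?_⟩
    · rwa [L1norm_const_mul, abs_neg, abs_one, one_mul]
    · rw [steer_const_mul, neg_one_smul]

lemma Rset_zero_subset : Rset n A b T 0 ⊆ {0} := by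
  rintro x ⟨u, hu, hL1, rfl⟩
  exact hu.steer_eq_zero_of_L1norm_eq_zero (le_antisymm hL1 (L1norm_nonneg T u))

end Control

theorem optimal_on_frontier_general (T : ℝ) (n : ℕ) (hn : 1 ≤ n)
    (A : Matrix (Fin n) (Fin n) ℝ) (b : Fin n → ℝ)
    (ξ : Fin n → ℝ)
    (ustar : ℝ → ℝ) (hustar : ustar ∈ Adm n A b T ξ)
    (hopt : ∀ u ∈ Adm n A b T ξ, L1norm T ustar ≤ L1norm T u) :
    ξ ∈ frontier (Rset n A b T (L1norm T ustar)) := by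
  have hcheaper : ∀ α < L1norm T ustar, ξ ∉ Rset n A b T α := fun α hα hξ => by
    obtain ⟨u, hu, hL1⟩ := mem_Rset_iff_exists_mem_Adm.1 hξ
    linarith [hopt u hu]
  refine ⟨subset_closure (mem_Rset_iff_exists_mem_Adm.2 ⟨ustar, hustar, le_rfl⟩), fun hint => ?_⟩
  rcases (L1norm_nonneg T ustar).eq_or_lt with hθ | hθ
  · have : Nonempty (Fin n) := Fin.pos_iff_nonempty.1 hn
    rw [← hθ] at hint
    simpa using interior_mono Rset_zero_subset hint
  · obtain ⟨t, ht, htξ⟩ := exists_one_lt_smul_mem_of_mem_nhds (mem_interior_iff_mem_nhds.1 hint)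
    exact hcheaper _ (mul_lt_of_lt_one_left hθ (inv_lt_one_of_one_lt₀ ht))
      (mem_Rset_of_smul_mem ht.le htξ)

/-- Lemma 5.5, boundary part: if `u*` is `L¹`-optimal for `ξ ∈ R(T)` and
`θ = ‖u*‖₁`, then `ξ ∈ ∂R_θ`. -/
theorem optimal_on_frontier (T : ℝ) (hT : 0 < T) (n : ℕ) (hn : 1 ≤ n)
    (A : Matrix (Fin n) (Fin n) ℝ) (b : Fin n → ℝ)
    (ξ : Fin n → ℝ) (hξ : ξ ∈ ReachSet n A b T)
    (ustar : ℝ → ℝ) (hustar : ustar ∈ Adm n A b T ξ)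
    (hopt : ∀ u ∈ Adm n A b T ξ, L1norm T ustar ≤ L1norm T u) :
    ξ ∈ frontier (Rset n A b T (L1norm T ustar)) :=
  optimal_on_frontier_general T n hn A b ξ ustar hustar hopt

end
end

section
/- (Lemma 5.7.) Assume the pair (A, b) is controllable (span{b, Ab, …, A^{n−1}b} = ℝⁿ) and A is invertible. Then R_α ⊆ int R_β whenever 0 ≤ α < β ≤ T, where int denotes topological interior. -/
open MeasureTheory

noncomputable section

/-!
Perturb a control `u` reaching `x` into `u + (1 - |u|) v`. Since `|u + (1 - |u|) v| ≤ 1`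
whenever `|v| ≤ 1`, this is again a control, and its `L¹` norm exceeds that of `u` by at most
`T · sup |v|`. For `v s = c ⬝ e^{-sA} b` the endpoint moves by `W c`, where
`W = ∫₀ᵀ (1 - |u s|) e^{-sA} b bᵀ e^{-Aᵀs} ds` is a weighted controllability Gramian.
`W` is positive definite: controllability makes `s ↦ c ⬝ e^{-sA} b` a nonzero analytic function
for `c ≠ 0`, so it vanishes only on a null set, while the weight `1 - |u|` is not a.e. zero
because `‖u‖₁ ≤ α < T`. Thus every `z` near `x` is reached with `c = W⁻¹ (z - x)` small, at
`L¹` cost at most `α + T · sup |v| ≤ β`.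
-/

open Matrix Set Filter Topology NormedSpace

theorem abs_add_slack_mul_le {x y : ℝ} (hx : |x| ≤ 1) :
    |x + (1 - |x|) * y| ≤ |x| + (1 - |x|) * |y| :=
  calc |x + (1 - |x|) * y| ≤ |x| + |(1 - |x|) * y| := abs_add_le _ _
    _ = |x| + (1 - |x|) * |y| := by rw [abs_mul, abs_of_nonneg (sub_nonneg.2 hx)]

theorem IsCompact.eventually_forall_abs_lt {X Y : Type*} [TopologicalSpace X]
    [TopologicalSpace Y] {K : Set Y} (hK : IsCompact K) {f : X → Y → ℝ}
    (hf : Continuous (Function.uncurry f)) {x₀ : X} (h0 : ∀ y ∈ K, f x₀ y = 0) {ε : ℝ}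
    (hε : 0 < ε) : ∀ᶠ x in 𝓝 x₀, ∀ y ∈ K, |f x y| < ε :=
  hK.eventually_forall_of_forall_eventually fun y hy =>
    hf.abs.continuousAt.eventually_lt continuousAt_const (by simpa [h0 y hy] using hε)

theorem AnalyticOnNhd.ae_restrict_ne_zero {f : ℝ → ℝ} (hf : AnalyticOnNhd ℝ f univ)
    (hf0 : ∃ x, f x ≠ 0) {K : Set ℝ} (hK : IsCompact K) : ∀ᵐ x ∂volume.restrict K, f x ≠ 0 := by
  rw [ae_restrict_iff' hK.measurableSet, ae_iff]
  simp only [Classical.not_imp, not_not]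
  by_contra hne
  have hinf : {x | x ∈ K ∧ f x = 0}.Infinite := fun hfin => hne (hfin.measure_zero _)
  obtain ⟨x₀, -, hacc⟩ := hinf.exists_accPt_of_subset_isCompact hK fun _ hx => hx.1
  have hfreq : ∃ᶠ x in 𝓝[≠] x₀, f x = 0 :=
    (accPt_iff_frequently_nhdsNE.mp hacc).mono fun _ hx => hx.2
  obtain ⟨x, hx⟩ := hf0
  exact hx (hf.eqOn_zero_of_preconnected_of_frequently_eq_zero isPreconnected_univ
    (mem_univ x₀) hfreq (mem_univ x))

section Gramian

variable {α : Type*} {n : ℕ}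

theorem gramian_integrand_apply (ρ : α → ℝ) (g : α → Fin n → ℝ) (c : Fin n → ℝ) (s : α)
    (i : Fin n) : ((ρ s * (c ⬝ᵥ g s)) • g s) i = ∑ j, ρ s * (g s i * g s j) * c j := by
  simp only [Pi.smul_apply, smul_eq_mul, dotProduct, Finset.mul_sum, Finset.sum_mul]
  exact Finset.sum_congr rfl fun j _ => by ring

variable [MeasurableSpace α] {μ : Measure α}

def gramian (μ : Measure α) (ρ : α → ℝ) (g : α → Fin n → ℝ) : Matrix (Fin n) (Fin n) ℝ :=
  Matrix.of fun i j => ∫ s, ρ s * (g s i * g s j) ∂μ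

theorem MeasureTheory.Integrable.const_dotProduct {F : α → Fin n → ℝ} (hF : Integrable F μ)
    (c : Fin n → ℝ) :
    Integrable (fun s => c ⬝ᵥ F s) μ :=
  integrable_finsetSum _ fun i _ => (hF.eval i).const_mul (c i)

theorem dotProduct_integral {F : α → Fin n → ℝ} (hF : Integrable F μ) (c : Fin n → ℝ) :
    c ⬝ᵥ ∫ s, F s ∂μ = ∫ s, c ⬝ᵥ F s ∂μ := by
  simp only [dotProduct, eval_integral hF.eval, ← integral_const_mul]
  exact (integral_finsetSum _ fun i _ => (hF.eval i).const_mul _).symm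

variable {ρ : α → ℝ} {g : α → Fin n → ℝ}

theorem integrable_gramian_integrand (hint : ∀ i j, Integrable (fun s => ρ s * (g s i * g s j)) μ)
    (c : Fin n → ℝ) : Integrable (fun s => (ρ s * (c ⬝ᵥ g s)) • g s) μ :=
  Integrable.of_eval fun i => by
    simp only [gramian_integrand_apply]
    exact integrable_finsetSum _ fun j _ => (hint i j).mul_const _

theorem gramian_mulVec (hint : ∀ i j, Integrable (fun s => ρ s * (g s i * g s j)) μ)
    (c : Fin n → ℝ) : gramian μ ρ g *ᵥ c = ∫ s, (ρ s * (c ⬝ᵥ g s)) • g s ∂μ := by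
  ext i
  rw [eval_integral (integrable_gramian_integrand hint c).eval]
  simp only [gramian_integrand_apply]
  rw [integral_finsetSum _ fun j _ => (hint i j).mul_const _]
  simp [mulVec, dotProduct, gramian, integral_mul_const]

theorem gramian_posDef (hint : ∀ i j, Integrable (fun s => ρ s * (g s i * g s j)) μ)
    (hρ : 0 ≤ᵐ[μ] ρ) (hnd : ∀ c ≠ 0, ¬ ∀ᵐ s ∂μ, ρ s * (c ⬝ᵥ g s) = 0) :
    (gramian μ ρ g).PosDef := by
  refine PosDef.of_dotProduct_mulVec_pos ?_ fun c hc => ?_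
  · ext i j
    simp only [conjTranspose_apply, gramian, of_apply, star_trivial, mul_comm (g _ i)]
  have hquad : ∀ s, c ⬝ᵥ ((ρ s * (c ⬝ᵥ g s)) • g s) = ρ s * (c ⬝ᵥ g s) ^ 2 := fun s => by
    rw [dotProduct_smul, smul_eq_mul]; ring
  have hF := integrable_gramian_integrand hint c
  have hnonneg : 0 ≤ᵐ[μ] fun s => ρ s * (c ⬝ᵥ g s) ^ 2 := by
    filter_upwards [hρ] with s hs using mul_nonneg hs (sq_nonneg _)
  rw [star_trivial, gramian_mulVec hint, dotProduct_integral hF, funext hquad]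
  refine (integral_nonneg_of_ae hnonneg).lt_of_ne fun h => hnd c hc ?_
  have hzero := (integral_eq_zero_iff_of_nonneg_ae hnonneg
    (by simpa only [hquad] using hF.const_dotProduct c)).mp h.symm
  filter_upwards [hzero] with s hs
  simpa [sq] using hs

end Gramian

section ExpCurve

variable {n : ℕ} (A : Matrix (Fin n) (Fin n) ℝ) (b : Fin n → ℝ)

def expCurve (s : ℝ) : Fin n → ℝ := exp (-(s • A)) *ᵥ b

theorem steer_eq_integral (T : ℝ) (u : ℝ → ℝ) :
    steer n A b T u = ∫ s in Icc 0 T, u s • expCurve A b s := rfl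

-- `exp` on matrices does not depend on a norm; this one only makes the normed-algebra API apply.
open scoped Matrix.Norms.Operator

theorem hasDerivAt_dotProduct_exp_smul_mulVec (M : Matrix (Fin n) (Fin n) ℝ) (c v : Fin n → ℝ)
    (t : ℝ) :
    HasDerivAt (fun t : ℝ => c ⬝ᵥ exp (t • M) *ᵥ v) (c ⬝ᵥ exp (t • M) *ᵥ (M *ᵥ v)) t := by
  let L : Matrix (Fin n) (Fin n) ℝ →L[ℝ] ℝ :=
    LinearMap.toContinuousLinearMap ((dotProductBilin ℝ ℝ c).comp ((mulVecBilin ℝ ℝ).flip v))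
  rw [mulVec_mulVec]
  exact L.hasFDerivAt.comp_hasDerivAt t (hasDerivAt_exp_smul_const M t)

theorem analyticAt_expCurve (s : ℝ) : AnalyticAt ℝ (expCurve A b) s := by
  let L : Matrix (Fin n) (Fin n) ℝ →L[ℝ] (Fin n → ℝ) :=
    LinearMap.toContinuousLinearMap ((mulVecBilin ℝ ℝ).flip b)
  have : expCurve A b = fun t => L (exp (t • -A)) := by
    funext t; simp [L, expCurve, smul_neg]
  rw [this]
  exact (L.analyticAt _).comp ((exp_analytic _).comp (analyticAt_id.smul analyticAt_const))

@[fun_prop]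
theorem continuous_expCurve : Continuous (expCurve A b) :=
  continuous_iff_continuousAt.2 fun s => (analyticAt_expCurve A b s).continuousAt

end ExpCurve

section Controllability

variable {n : ℕ} {A : Matrix (Fin n) (Fin n) ℝ} {b : Fin n → ℝ}

theorem Controllable.eq_zero_of_forall_dotProduct_pow_mulVec (h : Controllable n A b)
    {c : Fin n → ℝ} (hc : ∀ k : ℕ, c ⬝ᵥ (A ^ k) *ᵥ b = 0) : c = 0 := by
  have hker : Submodule.span ℝ (range fun i : Fin n => (A ^ (i : ℕ)) *ᵥ b) ≤
      LinearMap.ker (dotProductBilin ℝ ℝ c) :=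
    Submodule.span_le.mpr (by rintro _ ⟨i, rfl⟩; exact hc i)
  rw [show _ = ⊤ from h, top_le_iff] at hker
  exact dotProduct_self_eq_zero.mp (LinearMap.mem_ker.mp (hker ▸ Submodule.mem_top))

theorem Controllable.eq_zero_of_dotProduct_expCurve_eq_zero (h : Controllable n A b)
    {c : Fin n → ℝ} (hc : ∀ s, c ⬝ᵥ expCurve A b s = 0) : c = 0 := by
  have hpow : ∀ k : ℕ, ∀ t : ℝ, c ⬝ᵥ exp (t • -A) *ᵥ ((-A) ^ k *ᵥ b) = 0 := by
    intro k
    induction k with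
    | zero => simpa [expCurve, smul_neg] using hc
    | succ k ih =>
      intro t
      have hd := hasDerivAt_dotProduct_exp_smul_mulVec (-A) c ((-A) ^ k *ᵥ b) t
      rw [funext ih, mulVec_mulVec b (-A), ← pow_succ'] at hd
      exact hd.unique (hasDerivAt_const t 0)
  refine h.eq_zero_of_forall_dotProduct_pow_mulVec fun k => ?_
  have hk := hpow k 0
  rw [zero_smul, exp_zero, one_mulVec, ← neg_one_smul ℝ A, smul_pow, smul_mulVec,
    dotProduct_smul, smul_eq_zero] at hk
  exact hk.resolve_left (pow_ne_zero _ (by norm_num))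

theorem Controllable.ae_dotProduct_expCurve_ne_zero (h : Controllable n A b) {c : Fin n → ℝ}
    (hc : c ≠ 0) (T : ℝ) : ∀ᵐ s ∂volume.restrict (Icc 0 T), c ⬝ᵥ expCurve A b s ≠ 0 := by
  refine AnalyticOnNhd.ae_restrict_ne_zero (fun s _ => ?_) ?_ isCompact_Icc
  · exact ((LinearMap.toContinuousLinearMap (dotProductBilin ℝ ℝ c)).analyticAt _).comp
      (analyticAt_expCurve A b s)
  · by_contra! h0
    exact hc (h.eq_zero_of_dotProduct_expCurve_eq_zero h0)

end Controllability

section Controls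

variable {n : ℕ} {A : Matrix (Fin n) (Fin n) ℝ} {b : Fin n → ℝ} {T : ℝ} {u v : ℝ → ℝ}

theorem IsControl.integrableOn (hu : IsControl T u) : IntegrableOn u (Icc 0 T) :=
  Integrable.of_bound hu.1.aestronglyMeasurable 1 (hu.2.mono fun _ hs => by rwa [Real.norm_eq_abs])

theorem IsControl.integrableOn_smul {g : ℝ → Fin n → ℝ} (hu : IsControl T u)
    (hg : Continuous g) : IntegrableOn (fun s => u s • g s) (Icc 0 T) :=
  hg.integrableOn_Icc.bdd_smul 1 hu.1.aestronglyMeasurable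
    (hu.2.mono fun _ hs => by rwa [Real.norm_eq_abs])

theorem IsControl.integrableOn_slack_mul {f : ℝ → ℝ} (hu : IsControl T u) (hf : Continuous f) :
    IntegrableOn (fun s => (1 - |u s|) * f s) (Icc 0 T) :=
  hf.integrableOn_Icc.bdd_mul (c := 1) (measurable_const.sub hu.1.abs).aestronglyMeasurable
    (hu.2.mono fun s hs => by
      rw [Real.norm_eq_abs, abs_of_nonneg (sub_nonneg.2 hs)]; linarith [abs_nonneg (u s)])

theorem IsControl.add_slack_mul (hu : IsControl T u) (hv : Measurable v)
    (hv1 : ∀ s ∈ Icc 0 T, |v s| ≤ 1) : IsControl T (fun s => u s + (1 - |u s|) * v s) := by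
  refine ⟨hu.1.add ((measurable_const.sub hu.1.abs).mul hv), ?_⟩
  filter_upwards [hu.2, ae_restrict_mem measurableSet_Icc] with s hs hsI
  have := mul_le_of_le_one_right (sub_nonneg.2 hs) (hv1 s hsI)
  linarith [abs_add_slack_mul_le (y := v s) hs]

theorem L1norm_add_slack_mul_le {ε : ℝ} (hT : 0 ≤ T) (hu : IsControl T u) (hv : Measurable v)
    (hvε : ∀ s ∈ Icc 0 T, |v s| ≤ ε) (hε : ε ≤ 1) :
    L1norm T (fun s => u s + (1 - |u s|) * v s) ≤ L1norm T u + T * ε := by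
  have hw := hu.add_slack_mul hv fun s hs => (hvε s hs).trans hε
  have hbound : ∀ᵐ s ∂volume.restrict (Icc 0 T), |u s + (1 - |u s|) * v s| ≤ |u s| + ε := by
    filter_upwards [hu.2, ae_restrict_mem measurableSet_Icc] with s hs hsI
    have := mul_le_of_le_one_left (abs_nonneg (v s)) (by linarith [abs_nonneg (u s)] :
      1 - |u s| ≤ 1)
    linarith [abs_add_slack_mul_le (y := v s) hs, hvε s hsI]
  calc L1norm T (fun s => u s + (1 - |u s|) * v s) ≤ ∫ s in Icc 0 T, (|u s| + ε) :=
        integral_mono_ae hw.integrableOn.abs (hu.integrableOn.abs.add (integrable_const ε)) hbound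
    _ = L1norm T u + T * ε := by
        rw [integral_add hu.integrableOn.abs (integrable_const ε), setIntegral_const,
          Real.volume_real_Icc_of_le hT, sub_zero, smul_eq_mul, L1norm]

theorem steer_add (hu : IntegrableOn (fun s => u s • expCurve A b s) (Icc 0 T))
    (hv : IntegrableOn (fun s => v s • expCurve A b s) (Icc 0 T)) :
    steer n A b T (fun s => u s + v s) = steer n A b T u + steer n A b T v := by
  simp only [steer_eq_integral, add_smul]
  exact integral_add hu hv

end Controls

section SlackGramian

variable {n : ℕ} {A : Matrix (Fin n) (Fin n) ℝ} {b : Fin n → ℝ} {T : ℝ} {u : ℝ → ℝ}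

theorem IsControl.integrable_slack_mul_expCurve (hu : IsControl T u) (i j : Fin n) :
    Integrable (fun s => (1 - |u s|) * (expCurve A b s i * expCurve A b s j))
      (volume.restrict (Icc 0 T)) :=
  hu.integrableOn_slack_mul ((continuous_apply i).comp (continuous_expCurve A b) |>.mul
    ((continuous_apply j).comp (continuous_expCurve A b)))

theorem L1norm_eq_of_ae_abs_eq_one (h : ∀ᵐ s ∂volume.restrict (Icc 0 T), |u s| = 1) :
    L1norm T u = max T 0 := by
  rw [L1norm, integral_congr_ae h, setIntegral_const, Real.volume_real_Icc, sub_zero,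
    smul_eq_mul, mul_one]

theorem Controllable.gramian_slack_posDef (h : Controllable n A b) (hu : IsControl T u)
    (hlt : L1norm T u < T) :
    (gramian (volume.restrict (Icc 0 T)) (fun s => 1 - |u s|) (expCurve A b)).PosDef := by
  refine gramian_posDef hu.integrable_slack_mul_expCurve
    (hu.2.mono fun s hs => sub_nonneg.2 hs) fun c hc hzero => ?_
  have hsat : ∀ᵐ s ∂volume.restrict (Icc 0 T), |u s| = 1 := by
    filter_upwards [hzero, h.ae_dotProduct_expCurve_ne_zero hc T] with s hs hne
    linarith [(mul_eq_zero.mp hs).resolve_right hne]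
  rw [L1norm_eq_of_ae_abs_eq_one hsat] at hlt
  exact hlt.not_ge (le_max_left T 0)

theorem steer_slack_mul_dotProduct (hu : IsControl T u) (c : Fin n → ℝ) :
    steer n A b T (fun s => (1 - |u s|) * (c ⬝ᵥ expCurve A b s)) =
      gramian (volume.restrict (Icc 0 T)) (fun s => 1 - |u s|) (expCurve A b) *ᵥ c :=
  (gramian_mulVec hu.integrable_slack_mul_expCurve c).symm

end SlackGramian

theorem Rset_subset_interior_general (T : ℝ) (n : ℕ)
    (A : Matrix (Fin n) (Fin n) ℝ) (b : Fin n → ℝ)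
    (hctrb : Controllable n A b) :
    ∀ α β : ℝ, 0 ≤ α → α < β → β ≤ T →
      Rset n A b T α ⊆ interior (Rset n A b T β) := by
  rintro α β hα hαβ hβT _ ⟨u, hu, huα, rfl⟩
  have hT : 0 < T := by linarith
  set G := gramian (volume.restrict (Icc 0 T)) (fun s => 1 - |u s|) (expCurve A b)
  have hG : IsUnit G.det :=
    (isUnit_iff_isUnit_det G).mp (hctrb.gramian_slack_posDef hu (by linarith)).isUnit
  obtain ⟨ε, hε0, hε1, hεβ⟩ : ∃ ε, 0 < ε ∧ ε ≤ 1 ∧ α + T * ε ≤ β :=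
    ⟨min 1 ((β - α) / T), by positivity, min_le_left _ _, by
      nlinarith [min_le_right 1 ((β - α) / T), mul_div_cancel₀ (β - α) hT.ne']⟩
  set x := steer n A b T u
  have hsmall : ∀ᶠ z in 𝓝 x, ∀ s ∈ Icc 0 T, |(G⁻¹ *ᵥ (z - x)) ⬝ᵥ expCurve A b s| < ε :=
    isCompact_Icc.eventually_forall_abs_lt (by fun_prop) (fun s _ => by simp) hε0
  rw [mem_interior_iff_mem_nhds]
  filter_upwards [hsmall] with z hz
  have hv : Measurable fun s => (G⁻¹ *ᵥ (z - x)) ⬝ᵥ expCurve A b s :=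
    (by fun_prop : Continuous _).measurable
  refine ⟨_, hu.add_slack_mul hv fun s hs => (hz s hs).le.trans hε1,
    (L1norm_add_slack_mul_le hT.le hu hv (fun s hs => (hz s hs).le) hε1).trans (by linarith), ?_⟩
  rw [steer_add (hu.integrableOn_smul (continuous_expCurve A b))
      (integrable_gramian_integrand hu.integrable_slack_mul_expCurve _),
    steer_slack_mul_dotProduct hu, mulVec_mulVec, mul_nonsing_inv _ hG, one_mulVec,
    add_sub_cancel]

/-- Lemma 5.7: under controllability and invertibility of `A`,
`R_α ⊆ int R_β` whenever `0 ≤ α < β ≤ T`. -/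
theorem Rset_subset_interior (T : ℝ) (hT : 0 < T) (n : ℕ) (hn : 1 ≤ n)
    (A : Matrix (Fin n) (Fin n) ℝ) (b : Fin n → ℝ)
    (hctrb : Controllable n A b) (hA : IsUnit A) :
    ∀ α β : ℝ, 0 ≤ α → α < β → β ≤ T →
      Rset n A b T α ⊆ interior (Rset n A b T β) :=
  Rset_subset_interior_general T n A b hctrb
end
end

section
/- (Identity of value functions, used in the proof of Theorem 5.10.) Assume the pair (A, b) is controllable (span{b, Ab, …, A^{n−1}b} = ℝⁿ) and A is invertible. Then V₀(ξ) = V₁(ξ) for every ξ ∈ R(T), where V₀(ξ) = inf{‖u‖₀ : u ∈ U(ξ)} and V₁(ξ) = inf{‖u‖₁ : u ∈ U(ξ)}. -/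
/-!
`V₁ ≤ V₀` because a control bounded by `1` has `L¹` norm at most the measure of its support.

Conversely, given an admissible `u` and `ε > 0`, we build an admissible `v` whose support has
measure at most `‖u‖₁ + ε`. If `‖u‖₁ ≥ T`, `v = u` will do. Otherwise there are `θ > 0` and a
set `S` of positive measure on which `|u| ≤ 1 - θ`, confined to a window `(a, b)` of length `≤ ε`.
Adding `θ z`, `|z| ≤ 1`, to `u` on `S` moves the endpoint through a whole neighbourhood of `0`:
a functional vanishing on all `∫_S z(s) e^{-sA} b ds` vanishes on `e^{-sA} b` for a.e. `s ∈ S`,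
hence, by analyticity, for all `s`, hence on every `A^k b`, so it is `0` by controllability.
Outside the window, `u` is replaced on each cell of a fine partition by a single bang pulse with
the same integral; the pulses have total length `≤ ‖u‖₁`, and by uniform continuity of the kernel
the endpoint error is small enough to be cancelled by the correction on `S`.
-/

open MeasureTheory

noncomputable section

open Set Filter Topology
open scoped ENNReal Interval

theorem sInf_image_le_sInf_image {α : Type*} {s : Set α} {f g : α → ℝ} (hs : s.Nonempty)
    (hf : ∀ x ∈ s, 0 ≤ f x) (hfg : ∀ y ∈ s, ∀ ε > 0, ∃ x ∈ s, f x ≤ g y + ε) :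
    sInf (f '' s) ≤ sInf (g '' s) := by
  have hbdd : BddBelow (f '' s) := ⟨0, by rintro _ ⟨x, hx, rfl⟩; exact hf x hx⟩
  refine le_csInf (hs.image g) ?_
  rintro _ ⟨y, hy, rfl⟩
  refine le_of_forall_pos_le_add fun ε hε => ?_
  obtain ⟨x, hx, hxy⟩ := hfg y hy ε hε
  exact (csInf_le hbdd ⟨x, hx, rfl⟩).trans hxy

section Control

variable {E : Type*} [NormedAddCommGroup E] [NormedSpace ℝ E] {g : ℝ → E} {u v : ℝ → ℝ}
  {p q r : ℝ}

theorem Convex.mem_nhds_zero_of_span_eq_top [FiniteDimensional ℝ E] {C : Set E}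
    (hC : Convex ℝ C) (h0 : (0 : E) ∈ C) (hneg : ∀ x ∈ C, -x ∈ C)
    (hspan : Submodule.span ℝ C = ⊤) : C ∈ 𝓝 0 := by
  have haff : affineSpan ℝ C = ⊤ := by
    rw [AffineSubspace.affineSpan_eq_top_iff_vectorSpan_eq_top_of_nonempty ℝ E E ⟨0, h0⟩,
      vectorSpan_eq_span_vsub_set_right ℝ h0]
    simpa using hspan
  obtain ⟨x, hx⟩ := hC.interior_nonempty_iff_affineSpan_eq_top.2 haff
  have hx' : -x ∈ interior C :=
    interior_maximal (fun y hy => by simpa using hneg _ (interior_subset hy)) isOpen_interior.neg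
      (by simpa using hx)
  -- `0` is the midpoint of the interior points `x` and `-x`
  have := hC.interior hx hx' (by norm_num : (0 : ℝ) ≤ 1 / 2) (by norm_num : (0 : ℝ) ≤ 1 / 2)
    (by norm_num)
  rw [smul_neg, add_neg_cancel] at this
  exact mem_interior_iff_mem_nhds.1 this

theorem AnalyticOnNhd.eq_zero_of_ae_eq_zero {F : Type*} [NormedAddCommGroup F]
    [NormedSpace ℝ F] {f : ℝ → F} (hf : AnalyticOnNhd ℝ f univ) {S : Set ℝ}
    (hSb : Bornology.IsBounded S) (hS : 0 < volume S) (h0 : ∀ᵐ t ∂volume.restrict S, f t = 0) :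
    f = 0 := by
  set Z := S ∩ {t | f t = 0}
  have hopen : IsOpen {t | f t ≠ 0} :=
    isOpen_ne_fun (continuousOn_univ.1 hf.continuousOn) continuous_const
  have hnull : volume ({t | f t ≠ 0} ∩ S) = 0 := by
    rwa [ae_iff, Measure.restrict_apply hopen.measurableSet] at h0
  have hZ : 0 < volume Z := by
    refine hS.trans_le ((measure_mono fun t ht => ?_).trans
      ((measure_union_le Z _).trans_eq (by rw [hnull, add_zero])))
    by_cases hft : f t = 0
    exacts [Or.inl ⟨ht, hft⟩, Or.inr ⟨hft, ht⟩]
  -- a zero set of positive measure in a bounded set has an accumulation point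
  obtain ⟨x, -, hx⟩ := (show Z.Infinite from fun hfin => hZ.ne' (hfin.measure_zero _))
    |>.exists_accPt_of_subset_isCompact hSb.isCompact_closure
      (inter_subset_left.trans subset_closure)
  have := hf.eqOn_zero_of_preconnected_of_frequently_eq_zero isPreconnected_univ (mem_univ x)
    ((accPt_iff_frequently_nhdsNE.1 hx).mono fun y hy => hy.2)
  exact funext fun t => this (mem_univ t)

theorem integrableOn_of_abs_le_one (hv : Measurable v) (hv1 : ∀ t, |v t| ≤ 1) {K : Set ℝ}
    (hK : IsCompact K) : IntegrableOn v K :=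
  Measure.integrableOn_of_bounded hK.measure_lt_top.ne hv.aestronglyMeasurable (M := 1)
    (Eventually.of_forall hv1)

theorem integrableOn_smul_of_abs_le_one (hg : Continuous g) (hv : Measurable v)
    (hv1 : ∀ t, |v t| ≤ 1) {K : Set ℝ} (hK : IsCompact K) :
    IntegrableOn (fun t => v t • g t) K :=
  (integrableOn_of_abs_le_one hv hv1 hK).smul_continuousOn hg.continuousOn hK

theorem intervalIntegrable_of_abs_le_one (hv : Measurable v) (hv1 : ∀ t, |v t| ≤ 1) :
    IntervalIntegrable v volume p q :=
  (integrableOn_of_abs_le_one hv hv1 isCompact_uIcc).intervalIntegrable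

theorem intervalIntegrable_smul_of_abs_le_one (hg : Continuous g) (hv : Measurable v)
    (hv1 : ∀ t, |v t| ≤ 1) : IntervalIntegrable (fun t => v t • g t) volume p q :=
  (integrableOn_smul_of_abs_le_one hg hv hv1 isCompact_uIcc).intervalIntegrable

theorem exists_Ioo_inter_volume_pos {S : Set ℝ} (hS : 0 < volume S) {ε : ℝ} (hε : 0 < ε) :
    ∃ a, 0 < volume (S ∩ Ioo a (a + ε)) := by
  by_contra! h
  set δ := ε / 2
  have hδ : 0 < δ := half_pos hε
  have hεδ : ε = 2 * δ := by simp only [δ]; ring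
  have hcover : S ⊆ ⋃ k : ℤ, S ∩ Ioo (k * δ) (k * δ + ε) := fun t ht => by
    have h₁ := (le_div_iff₀ hδ).1 (Int.floor_le (t / δ))
    have h₂ := (div_lt_iff₀ hδ).1 (Int.lt_floor_add_one (t / δ))
    refine mem_iUnion.2 ⟨⌊t / δ⌋ - 1, ht, ?_, ?_⟩ <;> push_cast <;> linarith
  exact hS.ne' (measure_mono_null hcover (measure_iUnion_null fun k => nonpos_iff_eq_zero.1 (h _)))

theorem exists_Ioo_inter_volume_pos_of_subset {S : Set ℝ} (hSpq : S ⊆ Icc p q)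
    (hS : 0 < volume S) {ε : ℝ} (hε : 0 < ε) :
    ∃ a b, p ≤ a ∧ a ≤ b ∧ b ≤ q ∧ b - a ≤ ε ∧ 0 < volume (S ∩ Ioo a b) := by
  obtain ⟨a, ha⟩ := exists_Ioo_inter_volume_pos hS hε
  have hsub : S ∩ Ioo a (a + ε) ⊆ S ∩ Ioo (max a p) (min (a + ε) q) ∪ {p, q} := by
    rintro t ⟨htS, hat, hta⟩
    rcases eq_or_ne t p with rfl | htp
    · exact Or.inr (Or.inl rfl)
    rcases eq_or_ne t q with rfl | htq
    · exact Or.inr (Or.inr rfl)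
    exact Or.inl ⟨htS, max_lt hat (lt_of_le_of_ne (hSpq htS).1 htp.symm),
      lt_min hta (lt_of_le_of_ne (hSpq htS).2 htq)⟩
  have hpos : 0 < volume (S ∩ Ioo (max a p) (min (a + ε) q)) := by
    refine ha.trans_le ((measure_mono hsub).trans ((measure_union_le _ _).trans ?_))
    rw [(toFinite {p, q}).measure_zero, add_zero]
  obtain ⟨t, -, hat, htb⟩ := nonempty_of_measure_ne_zero hpos.ne'
  exact ⟨max a p, min (a + ε) q, le_max_right _ _, (hat.trans htb).le, min_le_right _ _,
    by linarith [le_max_left a p, min_le_left (a + ε) q], hpos⟩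

theorem exists_volume_abs_le_one_sub_pos (hu : Measurable u) (hu1 : ∀ t, |u t| ≤ 1)
    (hpq : p ≤ q) (h : ∫ t in p..q, |u t| < q - p) :
    ∃ θ > 0, 0 < volume {t ∈ Icc p q | |u t| ≤ 1 - θ} := by
  set α := ∫ t in p..q, |u t|
  have hα : 0 ≤ α := intervalIntegral.integral_nonneg hpq fun t _ => abs_nonneg _
  -- chosen so that `(1 - θ) (q - p)` is the midpoint of `α` and `q - p`
  set θ := (q - p - α) / (2 * (q - p))
  have hθ : θ * (2 * (q - p)) = q - p - α := div_mul_cancel₀ _ (by linarith)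
  refine ⟨θ, div_pos (by linarith) (by linarith), pos_iff_ne_zero.2 fun h0 => ?_⟩
  have hbig : ∀ᵐ t ∂volume.restrict (Icc p q), 1 - θ ≤ |u t| := by
    refine (ae_restrict_iff' measurableSet_Icc).2 ((measure_eq_zero_iff_ae_notMem.1 h0).mono ?_)
    intro t ht htI
    exact (not_le.1 fun h' => ht ⟨htI, h'⟩).le
  have := intervalIntegral.integral_mono_ae_restrict hpq intervalIntegrable_const
    ((intervalIntegrable_of_abs_le_one hu hu1).abs) hbig
  rw [intervalIntegral.integral_const, smul_eq_mul] at this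
  nlinarith

def glue (q : ℝ) (v₁ v₂ : ℝ → ℝ) (t : ℝ) : ℝ := if t ≤ q then v₁ t else v₂ t

theorem Measurable.glue {v₁ v₂ : ℝ → ℝ} (h₁ : Measurable v₁) (h₂ : Measurable v₂) :
    Measurable (glue q v₁ v₂) :=
  h₁.ite measurableSet_Iic h₂

theorem abs_glue_le_one {v₁ v₂ : ℝ → ℝ} (h₁ : ∀ t, |v₁ t| ≤ 1) (h₂ : ∀ t, |v₂ t| ≤ 1) (t : ℝ) :
    |glue q v₁ v₂ t| ≤ 1 := by
  unfold glue; split_ifs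
  exacts [h₁ t, h₂ t]

theorem tsupport_glue_subset (v₁ v₂ : ℝ → ℝ) :
    tsupport (glue q v₁ v₂) ⊆ tsupport v₁ ∪ tsupport v₂ := by
  refine (closure_mono fun t ht => ?_).trans closure_union.subset
  by_cases h : t ≤ q
  · exact Or.inl (by simpa [glue, Function.mem_support, h] using ht)
  · exact Or.inr (by simpa [glue, Function.mem_support, h] using ht)

theorem integral_glue_smul {v₁ v₂ : ℝ → ℝ} (hpq : p ≤ q) (hqr : q ≤ r)
    (h₁ : IntervalIntegrable (fun t => v₁ t • g t) volume p q)
    (h₂ : IntervalIntegrable (fun t => v₂ t • g t) volume q r) :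
    ∫ t in p..r, glue q v₁ v₂ t • g t = (∫ t in p..q, v₁ t • g t) + ∫ t in q..r, v₂ t • g t := by
  have e₁ : EqOn (fun t => glue q v₁ v₂ t • g t) (fun t => v₁ t • g t) (Ι p q) := fun t ht => by
    rw [uIoc_of_le hpq] at ht
    simp [glue, ht.2]
  have e₂ : EqOn (fun t => glue q v₁ v₂ t • g t) (fun t => v₂ t • g t) (Ι q r) := fun t ht => by
    rw [uIoc_of_le hqr] at ht
    simp [glue, not_le.2 ht.1]
  rw [← intervalIntegral.integral_add_adjacent_intervals ((intervalIntegrable_congr e₁).2 h₁)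
      ((intervalIntegrable_congr e₂).2 h₂),
    intervalIntegral.integral_congr_ae (Eventually.of_forall fun t ht => e₁ ht),
    intervalIntegral.integral_congr_ae (Eventually.of_forall fun t ht => e₂ ht)]

variable (g) in
def SparselyReachable (p q : ℝ) (m : ℝ≥0∞) (x : E) : Prop :=
  ∃ v : ℝ → ℝ, Measurable v ∧ (∀ t, |v t| ≤ 1) ∧ tsupport v ⊆ Icc p q ∧
    volume (tsupport v) ≤ m ∧ ∫ t in p..q, v t • g t = x

theorem SparselyReachable.mono {m m' : ℝ≥0∞} {x : E} (h : SparselyReachable g p q m x)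
    (hm : m ≤ m') : SparselyReachable g p q m' x :=
  let ⟨v, hv, hv1, hsupp, hvol, hx⟩ := h
  ⟨v, hv, hv1, hsupp, hvol.trans hm, hx⟩

theorem SparselyReachable.add (hg : Continuous g) (hpq : p ≤ q) (hqr : q ≤ r) {m₁ m₂ : ℝ≥0∞}
    {x₁ x₂ : E} (h₁ : SparselyReachable g p q m₁ x₁) (h₂ : SparselyReachable g q r m₂ x₂) :
    SparselyReachable g p r (m₁ + m₂) (x₁ + x₂) := by
  obtain ⟨v₁, hv₁, hv₁1, hsupp₁, hvol₁, rfl⟩ := h₁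
  obtain ⟨v₂, hv₂, hv₂1, hsupp₂, hvol₂, rfl⟩ := h₂
  refine ⟨glue q v₁ v₂, hv₁.glue hv₂, abs_glue_le_one hv₁1 hv₂1,
    (tsupport_glue_subset v₁ v₂).trans (union_subset (hsupp₁.trans (Icc_subset_Icc_right hqr))
      (hsupp₂.trans (Icc_subset_Icc_left hpq))),
    ((measure_mono (tsupport_glue_subset v₁ v₂)).trans (measure_union_le _ _)).trans
      (add_le_add hvol₁ hvol₂), ?_⟩
  exact integral_glue_smul hpq hqr (intervalIntegrable_smul_of_abs_le_one hg hv₁ hv₁1)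
    (intervalIntegrable_smul_of_abs_le_one hg hv₂ hv₂1)

theorem SparselyReachable.add_of_integral_abs (hg : Continuous g) (hu : Measurable u)
    (hu1 : ∀ t, |u t| ≤ 1) (hpq : p ≤ q) (hqr : q ≤ r) {x₁ x₂ : E}
    (h₁ : SparselyReachable g p q (ENNReal.ofReal (∫ t in p..q, |u t|)) x₁)
    (h₂ : SparselyReachable g q r (ENNReal.ofReal (∫ t in q..r, |u t|)) x₂) :
    SparselyReachable g p r (ENNReal.ofReal (∫ t in p..r, |u t|)) (x₁ + x₂) := by
  have habs {p q : ℝ} := (intervalIntegrable_of_abs_le_one hu hu1 (p := p) (q := q)).abs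
  rw [← intervalIntegral.integral_add_adjacent_intervals habs habs, ENNReal.ofReal_add
    (intervalIntegral.integral_nonneg hpq fun t _ => abs_nonneg _)
    (intervalIntegral.integral_nonneg hqr fun t _ => abs_nonneg _)]
  exact h₁.add hg hpq hqr h₂

theorem exists_sparselyReachable_pulse [CompleteSpace E] (hg : Continuous g) (hu : Measurable u)
    (hu1 : ∀ t, |u t| ≤ 1) (hpq : p ≤ q) {η : ℝ} (hη : ∀ t ∈ Icc p q, ‖g t - g p‖ ≤ η) :
    ∃ x, SparselyReachable g p q (ENNReal.ofReal (∫ t in p..q, |u t|)) x ∧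
      ‖x - ∫ t in p..q, u t • g t‖ ≤ 2 * η * (q - p) := by
  set c := ∫ t in p..q, u t
  have hc : |c| ≤ ∫ t in p..q, |u t| := intervalIntegral.abs_integral_le_integral_abs hpq
  have hcq : |c| ≤ q - p := by
    refine hc.trans ?_
    simpa using intervalIntegral.integral_mono_on hpq
      (intervalIntegrable_of_abs_le_one hu hu1).abs intervalIntegrable_const fun t _ => hu1 t
  -- a single full-throttle pulse at the start of `[p, q]` with the same integral as `u`
  set v := (Ioc p (p + |c|)).indicator fun _ => (SignType.sign c : ℝ)
  have hv : Measurable v := measurable_const.indicator measurableSet_Ioc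
  have hv1 (t : ℝ) : |v t| ≤ 1 := by
    by_cases ht : t ∈ Ioc p (p + |c|)
    · simp only [v, indicator_of_mem ht]
      cases SignType.sign c <;> simp
    · simp [v, indicator_of_notMem ht]
  have hvint : ∫ t in p..q, v t = c := by
    rw [intervalIntegral.integral_of_le hpq, integral_indicator_const _ measurableSet_Ioc,
      measureReal_restrict_apply measurableSet_Ioc,
      inter_eq_left.2 (Ioc_subset_Ioc_right (by linarith)), Real.volume_real_Ioc_of_le (by simp),
      add_sub_cancel_left, smul_eq_mul, abs_mul_sign]
  have hsupp : tsupport v ⊆ Icc p (p + |c|) :=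
    closure_minimal (support_indicator_subset.trans Ioc_subset_Icc_self) isClosed_Icc
  refine ⟨_, ⟨v, hv, hv1, hsupp.trans (Icc_subset_Icc_right (by linarith)),
    (measure_mono hsupp).trans ?_, rfl⟩, ?_⟩
  · rw [Real.volume_Icc, add_sub_cancel_left]
    exact ENNReal.ofReal_le_ofReal hc
  have hvg := intervalIntegrable_smul_of_abs_le_one hg hv hv1 (p := p) (q := q)
  have hug := intervalIntegrable_smul_of_abs_le_one hg hu hu1 (p := p) (q := q)
  have hvu := (intervalIntegrable_of_abs_le_one hv hv1 (p := p) (q := q)).sub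
    (intervalIntegrable_of_abs_le_one hu hu1)
  -- since `∫ (v - u) = 0`, the error only sees the oscillation `g t - g p`
  have hosc : (∫ t in p..q, v t • g t) - ∫ t in p..q, u t • g t =
      ∫ t in p..q, (v t - u t) • (g t - g p) := by
    have hexp : (fun t => (v t - u t) • (g t - g p)) =
        fun t => (v t • g t - u t • g t) - (v t - u t) • g p := by
      ext t; simp only [sub_smul, smul_sub]
    rw [hexp,
      intervalIntegral.integral_sub (hvg.sub hug) (hvu.smul_continuousOn continuousOn_const),
      intervalIntegral.integral_smul_const, intervalIntegral.integral_sub hvg hug,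
      intervalIntegral.integral_sub (intervalIntegrable_of_abs_le_one hv hv1)
        (intervalIntegrable_of_abs_le_one hu hu1), hvint, sub_self, zero_smul, sub_zero]
  rw [hosc, ← abs_of_nonneg (sub_nonneg.2 hpq)]
  refine intervalIntegral.norm_integral_le_of_norm_le_const fun t ht => ?_
  rw [uIoc_of_le hpq] at ht
  rw [norm_smul, Real.norm_eq_abs]
  refine mul_le_mul ((abs_sub _ _).trans ?_) (hη t (Ioc_subset_Icc_self ht)) (norm_nonneg _)
    zero_le_two
  linarith [hv1 t, hu1 t]

theorem exists_sparselyReachable_near [CompleteSpace E] (hg : Continuous g) (hu : Measurable u)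
    (hu1 : ∀ t, |u t| ≤ 1) (hpq : p ≤ q) {κ : ℝ} (hκ : 0 < κ) :
    ∃ x, SparselyReachable g p q (ENNReal.ofReal (∫ t in p..q, |u t|)) x ∧
      ‖x - ∫ t in p..q, u t • g t‖ ≤ κ := by
  set η := κ / (2 * (q - p) + 1)
  have hη : 0 < η := div_pos hκ (by linarith)
  obtain ⟨δ, hδ, hgδ⟩ := Metric.uniformContinuousOn_iff_le.1
    ((isCompact_Icc (a := p) (b := q)).uniformContinuousOn_of_continuous hg.continuousOn) η hη
  obtain ⟨N, hN⟩ := exists_nat_gt ((q - p) / δ)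
  have hN0 : (0 : ℝ) < N := lt_of_le_of_lt (div_nonneg (by linarith) hδ.le) hN
  -- cut `[p, q]` into `N` cells of length `h ≤ δ`, and put one pulse in each
  set h := (q - p) / N
  have hh0 : 0 ≤ h := div_nonneg (by linarith) hN0.le
  have hhδ : h ≤ δ := by
    rw [div_lt_iff₀ hδ] at hN
    exact (div_le_iff₀ hN0).2 (by linarith)
  have hNh : p + N * h = q := by
    simp only [h]; field_simp; ring
  have hcells (k : ℕ) (hk : k ≤ N) :
      ∃ x, SparselyReachable g p (p + k * h) (ENNReal.ofReal (∫ t in p..p + k * h, |u t|)) x ∧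
        ‖x - ∫ t in p..p + k * h, u t • g t‖ ≤ k * (2 * η * h) := by
    induction k with
    | zero => simpa using exists_sparselyReachable_pulse hg hu hu1 le_rfl (η := 0) (by simp)
    | succ k ih =>
      have hkN : (k + 1 : ℝ) ≤ N := by exact_mod_cast hk
      have hkh : 0 ≤ (k : ℝ) * h := by positivity
      have hkq : p + (k + 1) * h ≤ q := by rw [← hNh]; nlinarith
      obtain ⟨x, hx, hxu⟩ := ih (by omega)
      obtain ⟨y, hy, hyu⟩ := exists_sparselyReachable_pulse hg hu hu1 (p := p + k * h)
        (q := p + (k + 1) * h) (by nlinarith) (η := η) fun t ht => by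
          rw [← dist_eq_norm]
          refine hgδ t ⟨by linarith [ht.1], by linarith [ht.2]⟩ _ ⟨by linarith, by linarith⟩ ?_
          rw [Real.dist_eq, abs_of_nonneg (by linarith [ht.1])]
          linarith [ht.2]
      have hI := intervalIntegrable_smul_of_abs_le_one hg hu hu1 (p := p) (q := p + k * h)
      push_cast
      refine ⟨x + y, hx.add_of_integral_abs hg hu hu1 (by nlinarith) (by nlinarith) hy, ?_⟩
      rw [← intervalIntegral.integral_add_adjacent_intervals hI
        (intervalIntegrable_smul_of_abs_le_one hg hu hu1), add_sub_add_comm]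
      exact (norm_add_le _ _).trans (by linarith)
  obtain ⟨x, hx, hxu⟩ := hcells N le_rfl
  rw [hNh] at hx hxu
  refine ⟨x, hx, hxu.trans ?_⟩
  have : η * (2 * (q - p) + 1) = κ := div_mul_cancel₀ _ (by linarith)
  calc (N : ℝ) * (2 * η * h) = 2 * η * (q - p) := by rw [← hNh]; ring
    _ ≤ κ := by nlinarith

variable (g) in
def endpointSet (S : Set ℝ) : Set E :=
  {x | ∃ z : ℝ → ℝ, Measurable z ∧ (∀ t, |z t| ≤ 1) ∧ ∫ t in S, z t • g t = x}

variable {S : Set ℝ}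

theorem zero_mem_endpointSet : (0 : E) ∈ endpointSet g S :=
  ⟨0, measurable_const, by simp, by simp⟩

theorem neg_mem_endpointSet {x : E} (hx : x ∈ endpointSet g S) : -x ∈ endpointSet g S := by
  obtain ⟨z, hz, hz1, rfl⟩ := hx
  exact ⟨-z, hz.neg, by simpa using hz1, by simp [neg_smul, integral_neg]⟩

theorem convex_endpointSet (hg : Continuous g) (hSb : Bornology.IsBounded S) :
    Convex ℝ (endpointSet g S) := by
  rintro _ ⟨z₁, hz₁, hz₁1, rfl⟩ _ ⟨z₂, hz₂, hz₂1, rfl⟩ a b ha hb hab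
  have hint {z : ℝ → ℝ} (hz : Measurable z) (hz1 : ∀ t, |z t| ≤ 1) :
      IntegrableOn (fun t => z t • g t) S :=
    (integrableOn_smul_of_abs_le_one hg hz hz1 hSb.isCompact_closure).mono_set subset_closure
  refine ⟨fun t => a * z₁ t + b * z₂ t, (hz₁.const_mul a).add (hz₂.const_mul b), fun t => ?_, ?_⟩
  · calc |a * z₁ t + b * z₂ t| ≤ a * |z₁ t| + b * |z₂ t| := by
          simpa [abs_mul, abs_of_nonneg ha, abs_of_nonneg hb] using
            abs_add_le (a * z₁ t) (b * z₂ t)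
      _ ≤ a * 1 + b * 1 := by gcongr; exacts [hz₁1 t, hz₂1 t]
      _ = 1 := by rw [mul_one, mul_one, hab]
  · simp only [add_smul, mul_smul]
    rw [integral_add (f := fun t => a • z₁ t • g t) (g := fun t => b • z₂ t • g t)
      ((hint hz₁ hz₁1).smul a) ((hint hz₂ hz₂1).smul b), integral_smul, integral_smul]

theorem ae_eq_zero_of_forall_endpointSet [CompleteSpace E] (hg : Continuous g)
    (hSb : Bornology.IsBounded S) (φ : E →L[ℝ] ℝ) (hφ : ∀ x ∈ endpointSet g S, φ x = 0) :
    ∀ᵐ t ∂volume.restrict S, φ (g t) = 0 := by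
  have hf : Continuous fun t => φ (g t) := φ.continuous.comp hg
  -- testing `φ` against the control `z = sign (φ ∘ g)` gives `∫_S |φ ∘ g| = 0`
  set z : ℝ → ℝ := fun t => if 0 ≤ φ (g t) then 1 else -1
  have hz : Measurable z := Measurable.ite (measurableSet_le measurable_const hf.measurable)
    measurable_const measurable_const
  have hz1 (t : ℝ) : |z t| ≤ 1 := by simp only [z]; split_ifs <;> simp
  have hzf (t : ℝ) : z t * φ (g t) = |φ (g t)| := by
    simp only [z]; split_ifs with h
    · rw [one_mul, abs_of_nonneg h]
    · rw [neg_one_mul, abs_of_neg (not_le.1 h)]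
  have hint : ∫ t in S, |φ (g t)| = 0 := by
    have h := hφ _ ⟨z, hz, hz1, rfl⟩
    rw [← ContinuousLinearMap.integral_comp_comm _ ((integrableOn_smul_of_abs_le_one hg hz hz1
      hSb.isCompact_closure).mono_set subset_closure)] at h
    simpa [hzf] using h
  have hfS : IntegrableOn (fun t => |φ (g t)|) S :=
    (hf.abs.continuousOn.integrableOn_compact hSb.isCompact_closure).mono_set subset_closure
  filter_upwards [(integral_eq_zero_iff_of_nonneg (fun t => abs_nonneg _) hfS).1 hint]
    with t ht using abs_eq_zero.1 ht

theorem span_endpointSet_eq_top [FiniteDimensional ℝ E] (hg : AnalyticOnNhd ℝ g univ)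
    (hspan : Submodule.span ℝ (range g) = ⊤) (hSb : Bornology.IsBounded S) (hS : 0 < volume S) :
    Submodule.span ℝ (endpointSet g S) = ⊤ := by
  have := FiniteDimensional.complete ℝ E
  by_contra hC
  obtain ⟨φ, hφ0, hφ⟩ :=
    Submodule.exists_dual_map_eq_bot_of_lt_top (lt_top_iff_ne_top.2 hC) inferInstance
  have hφS : ∀ᵐ t ∂volume.restrict S, φ (g t) = 0 :=
    ae_eq_zero_of_forall_endpointSet (continuousOn_univ.1 hg.continuousOn) hSb
      φ.toContinuousLinearMap fun _ hx => LinearMap.le_ker_iff_map.2 hφ (Submodule.subset_span hx)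
  have hφg : (fun t => φ (g t)) = 0 :=
    AnalyticOnNhd.eq_zero_of_ae_eq_zero
      (fun t _ => (φ.toContinuousLinearMap.analyticAt _).comp (hg t trivial)) hSb hS hφS
  refine hφ0 (LinearMap.ext fun x => ?_)
  have : range g ⊆ LinearMap.ker φ := fun _ ⟨t, ht⟩ => ht ▸ congrFun hφg t
  exact (Submodule.span_le.2 this) (hspan ▸ Submodule.mem_top)

theorem endpointSet_mem_nhds_zero [FiniteDimensional ℝ E] (hg : AnalyticOnNhd ℝ g univ)
    (hspan : Submodule.span ℝ (range g) = ⊤) (hSb : Bornology.IsBounded S) (hS : 0 < volume S) :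
    endpointSet g S ∈ 𝓝 0 :=
  (convex_endpointSet (continuousOn_univ.1 hg.continuousOn) hSb).mem_nhds_zero_of_span_eq_top
    zero_mem_endpointSet (fun _ => neg_mem_endpointSet) (span_endpointSet_eq_top hg hspan hSb hS)


theorem sparselyReachable_add_of_mem_endpointSet [CompleteSpace E] (hg : Continuous g)
    (hu : Measurable u) (hu1 : ∀ t, |u t| ≤ 1) (hpq : p ≤ q) {S : Set ℝ} (hSm : MeasurableSet S)
    (hS : S ⊆ Ioc p q) {θ : ℝ} (hθ : 0 < θ) (huS : ∀ t ∈ S, |u t| ≤ 1 - θ) {d : E}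
    (hd : θ⁻¹ • d ∈ endpointSet g S) :
    SparselyReachable g p q (ENNReal.ofReal (q - p)) ((∫ t in p..q, u t • g t) + d) := by
  obtain ⟨z, hz, hz1, hzd⟩ := hd
  have hsupp : tsupport ((Ioc p q).indicator fun t => u t + θ * S.indicator z t) ⊆ Icc p q :=
    closure_minimal (support_indicator_subset.trans Ioc_subset_Icc_self) isClosed_Icc
  refine ⟨(Ioc p q).indicator fun t => u t + θ * S.indicator z t,
    (hu.add ((hz.indicator hSm).const_mul θ)).indicator measurableSet_Ioc, fun t => ?_, hsupp,
    (measure_mono hsupp).trans_eq Real.volume_Icc, ?_⟩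
  · by_cases ht : t ∈ Ioc p q
    · rw [indicator_of_mem ht]
      by_cases htS : t ∈ S
      · rw [indicator_of_mem htS]
        calc |u t + θ * z t| ≤ |u t| + θ * |z t| := by
              simpa [abs_mul, abs_of_pos hθ] using abs_add_le (u t) (θ * z t)
          _ ≤ (1 - θ) + θ * 1 := by gcongr; exacts [huS t htS, hz1 t]
          _ = 1 := by ring
      · simpa [indicator_of_notMem htS] using hu1 t
    · simp [indicator_of_notMem ht]
  have hug : IntegrableOn (fun t => u t • g t) (Ioc p q) :=
    (integrableOn_smul_of_abs_le_one hg hu hu1 isCompact_Icc).mono_set Ioc_subset_Icc_self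
  have hzg : IntegrableOn (fun t => z t • g t) (Ioc p q) :=
    (integrableOn_smul_of_abs_le_one hg hz hz1 isCompact_Icc).mono_set Ioc_subset_Icc_self
  have hzS : ∫ t in S, z t • g t = ∫ t in Ioc p q, S.indicator (fun t => z t • g t) t := by
    rw [setIntegral_indicator hSm, inter_eq_right.2 hS]
  rw [intervalIntegral.integral_of_le hpq, intervalIntegral.integral_of_le hpq,
    ← smul_inv_smul₀ hθ.ne' d, ← hzd, hzS, ← integral_smul]
  refine (setIntegral_congr_fun measurableSet_Ioc fun t ht => ?_).trans
    (integral_add hug ((hzg.indicator hSm).smul θ))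
  by_cases htS : t ∈ S <;> simp [ht, htS, add_smul, mul_smul]

theorem sparselyReachable_of_endpointSet_mem_nhds [CompleteSpace E] (hg : Continuous g)
    (hu : Measurable u) (hu1 : ∀ t, |u t| ≤ 1) {T a b : ℝ} (ha : 0 ≤ a) (hab : a ≤ b)
    (hbT : b ≤ T) {S : Set ℝ} (hSm : MeasurableSet S) (hS : S ⊆ Ioc a b) {θ : ℝ} (hθ : 0 < θ)
    (huS : ∀ t ∈ S, |u t| ≤ 1 - θ) (hSnhds : endpointSet g S ∈ 𝓝 0) :
    SparselyReachable g 0 T (ENNReal.ofReal ((∫ t in 0..T, |u t|) + (b - a)))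
      (∫ t in 0..T, u t • g t) := by
  obtain ⟨r, hr, hball⟩ := Metric.mem_nhds_iff.1 hSnhds
  have hκ : 0 < θ * r / 4 := by positivity
  obtain ⟨xL, hL, hxL⟩ := exists_sparselyReachable_near hg hu hu1 ha hκ
  obtain ⟨xR, hR, hxR⟩ := exists_sparselyReachable_near hg hu hu1 hbT hκ
  -- a correction during `S` makes up for the errors of both sparse approximations
  set d := ((∫ t in 0..a, u t • g t) - xL) + ((∫ t in b..T, u t • g t) - xR)
  have hd : θ⁻¹ • d ∈ endpointSet g S := hball <| by
    rw [mem_ball_zero_iff, norm_smul, norm_inv, Real.norm_of_nonneg hθ.le, inv_mul_lt_iff₀ hθ]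
    calc ‖d‖ ≤ θ * r / 4 + θ * r / 4 := (norm_add_le _ _).trans
          (add_le_add (by rwa [norm_sub_rev]) (by rwa [norm_sub_rev]))
      _ < θ * r := by linarith
  have hM := sparselyReachable_add_of_mem_endpointSet hg hu hu1 hab hSm hS hθ huS hd
  have hI {p q : ℝ} := intervalIntegrable_smul_of_abs_le_one hg hu hu1 (p := p) (q := q)
  have habs {p q : ℝ} := (intervalIntegrable_of_abs_le_one hu hu1 (p := p) (q := q)).abs
  have hsplit : (∫ t in 0..a, u t • g t) + (∫ t in a..b, u t • g t) + (∫ t in b..T, u t • g t) =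
      ∫ t in 0..T, u t • g t := by
    rw [intervalIntegral.integral_add_adjacent_intervals hI hI,
      intervalIntegral.integral_add_adjacent_intervals hI hI]
  have hsplit' : (∫ t in 0..a, |u t|) + (∫ t in a..b, |u t|) + (∫ t in b..T, |u t|) =
      ∫ t in 0..T, |u t| := by
    rw [intervalIntegral.integral_add_adjacent_intervals habs habs,
      intervalIntegral.integral_add_adjacent_intervals habs habs]
  have hnonneg {p q : ℝ} (hpq : p ≤ q) : 0 ≤ ∫ t in p..q, |u t| :=
    intervalIntegral.integral_nonneg hpq fun _ _ => abs_nonneg _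
  have hx : xL + ((∫ t in a..b, u t • g t) + d + xR) = ∫ t in 0..T, u t • g t := by
    rw [← hsplit]
    simp only [d]
    abel
  rw [← hx]
  refine (hL.add hg ha (hab.trans hbT) (hM.add hg hab hbT hR)).mono ?_
  rw [← ENNReal.ofReal_add (by linarith) (hnonneg hbT),
    ← ENNReal.ofReal_add (hnonneg ha) (by linarith [hnonneg hbT])]
  exact ENNReal.ofReal_le_ofReal (by linarith [hnonneg hab])

theorem sparselyReachable_of_abs_le_one [FiniteDimensional ℝ E] (hg : AnalyticOnNhd ℝ g univ)
    (hspan : Submodule.span ℝ (range g) = ⊤) (hu : Measurable u) (hu1 : ∀ t, |u t| ≤ 1) {T : ℝ}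
    (hT : 0 ≤ T) (huT : ∫ t in 0..T, |u t| < T) {ε : ℝ} (hε : 0 < ε) :
    SparselyReachable g 0 T (ENNReal.ofReal ((∫ t in 0..T, |u t|) + ε))
      (∫ t in 0..T, u t • g t) := by
  have := FiniteDimensional.complete ℝ E
  obtain ⟨θ, hθ, hpos⟩ := exists_volume_abs_le_one_sub_pos hu hu1 hT (by rwa [sub_zero])
  obtain ⟨a, b, ha, hab, hbT, hbaε, hSpos⟩ :=
    exists_Ioo_inter_volume_pos_of_subset (sep_subset _ _) hpos hε
  have hSm : MeasurableSet ({t ∈ Icc 0 T | |u t| ≤ 1 - θ} ∩ Ioo a b) :=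
    (measurableSet_Icc.inter (measurableSet_le hu.abs measurable_const)).inter measurableSet_Ioo
  refine (sparselyReachable_of_endpointSet_mem_nhds (continuousOn_univ.1 hg.continuousOn) hu hu1
    ha hab hbT hSm (inter_subset_right.trans Ioo_subset_Ioc_self) hθ (fun t ht => ht.1.2)
    (endpointSet_mem_nhds_zero hg hspan ((Metric.isBounded_Ioo a b).subset inter_subset_right)
      hSpos)).mono (ENNReal.ofReal_le_ofReal (by linarith))

theorem IsControl.exists_ae_eq_abs_le_one {T : ℝ} (hu : IsControl T u) :
    ∃ ũ : ℝ → ℝ, Measurable ũ ∧ (∀ t, |ũ t| ≤ 1) ∧ ũ =ᵐ[volume.restrict (Icc 0 T)] u :=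
  ⟨fun t => if |u t| ≤ 1 then u t else 0,
    Measurable.ite (measurableSet_le hu.1.abs measurable_const) hu.1 measurable_const,
    fun t => by dsimp only; split_ifs with h; exacts [h, by simp],
    hu.2.mono fun t ht => if_pos ht⟩

theorem volume_sparseSupp_le (T : ℝ) : volume (sparseSupp T u) ≤ ENNReal.ofReal T :=
  (measure_mono (closure_minimal (sep_subset _ _) isClosed_Icc)).trans_eq
    (by rw [Real.volume_Icc, sub_zero])

theorem exists_sparse_control [FiniteDimensional ℝ E] (hg : AnalyticOnNhd ℝ g univ)
    (hspan : Submodule.span ℝ (range g) = ⊤) {T : ℝ} (hu : IsControl T u) {ε : ℝ} (hε : 0 < ε) :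
    ∃ v : ℝ → ℝ, IsControl T v ∧ ∫ t in Icc 0 T, v t • g t = ∫ t in Icc 0 T, u t • g t ∧
      L0norm T v ≤ L1norm T u + ε := by
  have hL1 : 0 ≤ L1norm T u := integral_nonneg fun _ => abs_nonneg _
  by_cases hTu : T ≤ L1norm T u
  · exact ⟨u, hu, rfl, ENNReal.toReal_le_of_le_ofReal (by linarith)
      ((volume_sparseSupp_le T).trans (ENNReal.ofReal_le_ofReal (by linarith)))⟩
  have hT : 0 ≤ T := by linarith
  obtain ⟨ũ, hũ, hũ1, hũu⟩ := hu.exists_ae_eq_abs_le_one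
  have hIcc (f : ℝ → E) : ∫ t in Icc 0 T, f t = ∫ t in 0..T, f t := by
    rw [intervalIntegral.integral_of_le hT, integral_Icc_eq_integral_Ioc]
  have hL1ũ : L1norm T u = ∫ t in 0..T, |ũ t| := by
    rw [intervalIntegral.integral_of_le hT, ← integral_Icc_eq_integral_Ioc]
    refine integral_congr_ae ?_
    filter_upwards [hũu] with t ht using by rw [ht]
  have hgũ : ∫ t in Icc 0 T, u t • g t = ∫ t in 0..T, ũ t • g t := by
    rw [← hIcc]
    refine integral_congr_ae ?_
    filter_upwards [hũu] with t ht using by rw [ht]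
  obtain ⟨v, hv, hv1, -, hvol, hvint⟩ :=
    sparselyReachable_of_abs_le_one hg hspan hũ hũ1 hT (by linarith) hε
  refine ⟨v, ⟨hv, ae_of_all _ hv1⟩, by rw [hIcc, hvint, hgũ], ?_⟩
  rw [hL1ũ]
  exact ENNReal.toReal_le_of_le_ofReal (by linarith)
    ((measure_mono (closure_mono fun t ht => ht.2)).trans hvol)

theorem L1norm_le_L0norm {T : ℝ} (hu : IsControl T u) : L1norm T u ≤ L0norm T u := by
  have hsub : sparseSupp T u ⊆ Icc 0 T := closure_minimal (sep_subset _ _) isClosed_Icc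
  have hzero (t : ℝ) (ht : t ∈ Icc 0 T \ sparseSupp T u) : |u t| = 0 :=
    abs_eq_zero.2 (not_not.1 fun h => ht.2 (subset_closure ⟨ht.1, h⟩))
  calc L1norm T u = ∫ t in sparseSupp T u, |u t| :=
        setIntegral_eq_of_subset_of_forall_sdiff_eq_zero measurableSet_Icc hsub hzero
    _ ≤ ‖∫ t in sparseSupp T u, |u t|‖ := Real.le_norm_self _
    _ ≤ 1 * volume.real (sparseSupp T u) :=
        norm_setIntegral_le_of_norm_le_const_ae
          ((measure_mono hsub).trans_lt measure_Icc_lt_top)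
          (by filter_upwards [ae_restrict_of_ae_restrict_of_subset hsub hu.2] with t ht
              simpa using ht)
    _ = L0norm T u := one_mul _

end Control

section ExpKernel

open Matrix

variable {n : ℕ} (A : Matrix (Fin n) (Fin n) ℝ) (b : Fin n → ℝ)

def expKernel (s : ℝ) : Fin n → ℝ := (NormedSpace.exp (-(s • A))).mulVec b

-- `NormedSpace.exp` only depends on the topology, so any Banach algebra norm on matrices will do.
attribute [local instance] Matrix.linftyOpNormedRing Matrix.linftyOpNormedAlgebra

theorem analyticOnNhd_expKernel : AnalyticOnNhd ℝ (expKernel A b) univ := by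
  intro s _
  have hexp : AnalyticAt ℝ (fun s : ℝ => NormedSpace.exp (s • -A)) s :=
    (NormedSpace.exp_analytic _).comp (((1 : ℝ →L[ℝ] ℝ).smulRight (-A)).analyticAt s)
  have hfun : expKernel A b = ((mulVecBilin ℝ ℝ).flip b).toContinuousLinearMap ∘
      fun s : ℝ => NormedSpace.exp (s • -A) := by
    funext s
    simp [expKernel, smul_neg, mulVecBilin_apply]
  rw [hfun]
  exact (((mulVecBilin ℝ ℝ).flip b).toContinuousLinearMap.analyticAt _).comp hexp

theorem hasDerivAt_exp_smul_mulVec (X : Matrix (Fin n) (Fin n) ℝ) (c : Fin n → ℝ) (s : ℝ) :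
    HasDerivAt (fun t : ℝ => NormedSpace.exp (t • X) *ᵥ c)
      (NormedSpace.exp (s • X) *ᵥ (X *ᵥ c)) s := by
  have := (((mulVecBilin ℝ ℝ).flip c).toContinuousLinearMap.hasFDerivAt).comp_hasDerivAt s
    (hasDerivAt_exp_smul_const X s)
  rw [mulVec_mulVec]
  exact this

theorem pow_mulVec_mem_span_range_expKernel (k : ℕ) :
    (A ^ k) *ᵥ b ∈ Submodule.span ℝ (range (expKernel A b)) := by
  by_contra hk
  obtain ⟨φ, hφk, hφ⟩ := Submodule.exists_dual_map_eq_bot_of_notMem hk inferInstance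
  have hφg (s : ℝ) : φ (expKernel A b s) = 0 :=
    LinearMap.le_ker_iff_map.2 hφ (Submodule.subset_span (mem_range_self s))
  -- the successive derivatives of `s ↦ φ (e^{-sA} b)`, all identically zero
  have hderiv (j : ℕ) (s : ℝ) : φ (NormedSpace.exp (s • -A) *ᵥ ((-A) ^ j *ᵥ b)) = 0 := by
    induction j generalizing s with
    | zero => simpa [expKernel, smul_neg] using hφg s
    | succ j ih =>
      have hd := φ.toContinuousLinearMap.hasFDerivAt.comp_hasDerivAt s
        (hasDerivAt_exp_smul_mulVec (-A) ((-A) ^ j *ᵥ b) s)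
      have h0 : HasDerivAt (fun t : ℝ => φ (NormedSpace.exp (t • -A) *ᵥ ((-A) ^ j *ᵥ b))) 0 s := by
        simpa only [ih] using hasDerivAt_const s (0 : ℝ)
      rw [pow_succ', ← mulVec_mulVec]
      exact hd.unique h0
  have h := hderiv k 0
  rw [zero_smul, NormedSpace.exp_zero, one_mulVec, neg_pow] at h
  rcases neg_one_pow_eq_or (Matrix (Fin n) (Fin n) ℝ) k with h1 | h1 <;>
    simp [h1, neg_mulVec] at h <;> exact hφk h

theorem span_range_expKernel (hctrb : Controllable n A b) :
    Submodule.span ℝ (range (expKernel A b)) = ⊤ :=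
  eq_top_iff.2 <| hctrb ▸ Submodule.span_le.2 <| by
    rintro _ ⟨i, rfl⟩
    exact pow_mulVec_mem_span_range_expKernel A b i

end ExpKernel

theorem V0_eq_V1_general (T : ℝ) (n : ℕ)
    (A : Matrix (Fin n) (Fin n) ℝ) (b : Fin n → ℝ)
    (hctrb : Controllable n A b) :
    ∀ ξ ∈ ReachSet n A b T, V0 n A b T ξ = V1 n A b T ξ := by
  rintro ξ ⟨u, hu, rfl⟩
  have hne : (Adm n A b T (steer n A b T u)).Nonempty := by
    refine ⟨fun t => -u t, ⟨hu.1.neg, hu.2.mono fun t ht => by rwa [abs_neg]⟩, ?_⟩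
    simp only [steer, neg_smul, integral_neg, neg_neg]
  apply le_antisymm
  · refine sInf_image_le_sInf_image hne (fun _ _ => ENNReal.toReal_nonneg) fun v hv ε hε => ?_
    obtain ⟨w, hw, hwv, hwε⟩ := exists_sparse_control (analyticOnNhd_expKernel A b)
      (span_range_expKernel A b hctrb) hv.1 hε
    exact ⟨w, ⟨hw, hv.2.trans (congrArg Neg.neg hwv.symm)⟩, hwε⟩
  · refine sInf_image_le_sInf_image hne (fun _ _ => integral_nonneg fun _ => abs_nonneg _)
      fun v hv ε hε => ⟨v, hv, (L1norm_le_L0norm hv.1).trans (le_add_of_nonneg_right hε.le)⟩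

/-- under controllability and invertibility of `A`,
`V₀(ξ) = V₁(ξ)` for every `ξ ∈ R(T)`. -/
theorem V0_eq_V1 (T : ℝ) (hT : 0 < T) (n : ℕ) (hn : 1 ≤ n)
    (A : Matrix (Fin n) (Fin n) ℝ) (b : Fin n → ℝ)
    (hctrb : Controllable n A b) (hA : IsUnit A) :
    ∀ ξ ∈ ReachSet n A b T, V0 n A b T ξ = V1 n A b T ξ :=
  V0_eq_V1_general T n A b hctrb

end
end
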